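/- arXiv:1706.08465 — 8 statements merged into one kernel-verified Lean document; each statement's English description precedes it below -/
import Mathlib

section
/- In a 3-uniform hypergraph containing no loose path of length two, every connected component is either a 2-star (all edges contain a common fixed pair of vertices) or a subhypergraph of the complete 3-uniform hypergraph on 4 vertices. -/
/-- Two edges of a hypergraph are in the same component if they are connected
by a chain of edges with pairwise nonempty consecutive intersections. -/
def HypReach {V : Type*} [DecidableEq V] (H : Finset (Finset V)) :
    Finset V → Finset V → Prop :=
  Relation.ReflTransGen (fun a b => a ∈ H ∧ b ∈ H ∧ (a ∩ b).Nonempty)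

/-- In a 3-uniform hypergraph with no loose path of length two (no two edges
meeting in exactly one vertex), each connected component is either a 2-star
(all its edges contain a common pair of distinct vertices) or is contained in
a complete 3-graph on at most 4 vertices. -/
theorem stmt_1 {V : Type*} [Fintype V] [DecidableEq V]
    (H : Finset (Finset V))
    (huniform : ∀ e ∈ H, e.card = 3)
    (hfree : ∀ e ∈ H, ∀ f ∈ H, e ≠ f → (e ∩ f).card ≠ 1) :
    ∀ e ∈ H,
      (∃ x y : V, x ≠ y ∧ ∀ f ∈ H, HypReach H e f → x ∈ f ∧ y ∈ f) ∨
      (∃ W : Finset V, W.card ≤ 4 ∧ ∀ f ∈ H, HypReach H e f → f ⊆ W) := by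
  intro e he
  -- two distinct intersecting edges of H meet in exactly 2 vertices
  have fact1 : ∀ u ∈ H, ∀ v ∈ H, (u ∩ v).Nonempty → u = v ∨ (u ∩ v).card = 2 := by
    intro u hu v hv hne
    by_cases huv : u = v
    · exact Or.inl huv
    · right
      have h1 : 1 ≤ (u ∩ v).card := Finset.card_pos.mpr hne
      have h3 : (u ∩ v).card ≤ 3 := by
        calc (u ∩ v).card ≤ u.card := Finset.card_le_card Finset.inter_subset_left
        _ = 3 := huniform u hu
      have hn1 : (u ∩ v).card ≠ 1 := hfree u hu v hv huv
      have hn3 : (u ∩ v).card ≠ 3 := by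
        intro hc
        apply huv
        have hsub : u ∩ v = u := Finset.eq_of_subset_of_card_le Finset.inter_subset_left
          (by rw [hc, huniform u hu])
        have hsub2 : u ∩ v = v := Finset.eq_of_subset_of_card_le Finset.inter_subset_right
          (by rw [hc, huniform v hv])
        rw [← hsub, hsub2]
      omega
  -- two 2-element subsets of a 3-element set intersect
  have fact2 : ∀ (s u v : Finset V), u ⊆ s → v ⊆ s → s.card = 3 → u.card = 2 →
      v.card = 2 → (u ∩ v).Nonempty := by
    intro s u v hus hvs hs hu hv
    have h1 : (u ∪ v).card ≤ 3 := by
      calc (u ∪ v).card ≤ s.card := Finset.card_le_card (Finset.union_subset hus hvs)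
      _ = 3 := hs
    have h2 := Finset.card_union_add_card_inter u v
    rw [← Finset.card_pos]
    omega
  -- key lemma: reachable edges intersect in exactly 2 vertices (or are equal)
  have key : ∀ a b : Finset V, HypReach H a b →
      a = b ∨ (a ∈ H ∧ b ∈ H ∧ (a ∩ b).card = 2) := by
    intro a b hab
    induction hab with
    | refl => exact Or.inl rfl
    | @tail b c hab hrel ih =>
      obtain ⟨hbH, hcH, hbc⟩ := hrel
      rcases fact1 b hbH c hcH hbc with hbceq | hbc2
      · subst hbceq; exact ih
      · rcases ih with hab' | ⟨haH, hbH', hab2⟩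
        · subst hab'
          rcases fact1 _ hbH _ hcH hbc with h | h
          · exact Or.inl h
          · exact Or.inr ⟨hbH, hcH, h⟩
        · -- a ∩ b and b ∩ c are 2-subsets of b, so they intersect, hence a ∩ c nonempty
          have hnon : ((a ∩ b) ∩ (b ∩ c)).Nonempty :=
            fact2 b (a ∩ b) (b ∩ c) Finset.inter_subset_right Finset.inter_subset_left
              (huniform b hbH) hab2 hbc2
          have hac : (a ∩ c).Nonempty := by
            obtain ⟨x, hx⟩ := hnon
            simp only [Finset.mem_inter] at hx
            exact ⟨x, Finset.mem_inter.mpr ⟨hx.1.1, hx.2.2⟩⟩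
          rcases fact1 a haH c hcH hac with h | h
          · exact Or.inl h
          · exact Or.inr ⟨haH, hcH, h⟩
  -- symmetry and transitivity of HypReach
  have hsymm : ∀ a b : Finset V, HypReach H a b → HypReach H b a := by
    intro a b h
    haveI : Std.Symm (fun a b : Finset V => a ∈ H ∧ b ∈ H ∧ (a ∩ b).Nonempty) :=
      ⟨fun x y ⟨h1, h2, h3⟩ => ⟨h2, h1, by rwa [Finset.inter_comm]⟩⟩
    exact Relation.ReflTransGen.symmetric.symm _ _ h
  by_cases hex : ∃ f ∈ H, HypReach H e f ∧ f ≠ e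
  · obtain ⟨f, hfH, hef, hfe⟩ := hex
    have hef2 : (e ∩ f).card = 2 := by
      rcases key e f hef with h | ⟨_, _, h⟩
      · exact absurd h.symm hfe
      · exact h
    set p := e ∩ f with hp
    by_cases hstar : ∀ g ∈ H, HypReach H e g → p ⊆ g
    · -- star case
      left
      obtain ⟨x, y, hxy, hpxy⟩ := Finset.card_eq_two.mp hef2
      refine ⟨x, y, hxy, fun g hgH heg => ?_⟩
      have hpg : p ⊆ g := hstar g hgH heg
      constructor
      · exact hpg (by rw [hpxy]; simp)
      · exact hpg (by rw [hpxy]; simp)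
    · -- 4-vertex case
      push_neg at hstar
      obtain ⟨g, hgH, heg, hpg⟩ := hstar
      right
      refine ⟨e ∪ f, ?_, ?_⟩
      · have h2 := Finset.card_union_add_card_inter e f
        rw [huniform e he, huniform f hfH, ← hp, hef2] at h2
        omega
      · -- first: every reachable edge contains p or is inside e ∪ f
        have L1 : ∀ h ∈ H, HypReach H e h → p ⊆ h ∨ h ⊆ e ∪ f := by
          intro h hhH heh
          by_cases hhe : h = e
          · subst hhe; exact Or.inl Finset.inter_subset_left
          by_cases hhf : h = f
          · subst hhf; exact Or.inl Finset.inter_subset_right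
          have heh2 : (e ∩ h).card = 2 := by
            rcases key e h heh with h' | ⟨_, _, h'⟩
            · exact absurd h'.symm hhe
            · exact h'
          have hfh2 : (f ∩ h).card = 2 := by
            have hfh : HypReach H f h := Relation.ReflTransGen.trans (hsymm e f hef) heh
            rcases key f h hfh with h' | ⟨_, _, h'⟩
            · exact absurd h'.symm hhf
            · exact h'
          by_cases heq : e ∩ h = f ∩ h
          · left
            have hsubp : e ∩ h ⊆ p := by
              intro x hx
              rw [hp, Finset.mem_inter]
              have hx' := hx
              rw [heq] at hx'
              exact ⟨(Finset.mem_inter.mp hx).1, (Finset.mem_inter.mp hx').1⟩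
            have : e ∩ h = p := Finset.eq_of_subset_of_card_le hsubp (by rw [hef2, heh2])
            rw [← this]
            exact Finset.inter_subset_right
          · right
            have hintc : ((e ∩ h) ∩ (f ∩ h)).card ≤ 1 := by
              by_contra hc
              push_neg at hc
              have hsub : (e ∩ h) ∩ (f ∩ h) = e ∩ h :=
                Finset.eq_of_subset_of_card_le Finset.inter_subset_left (by omega)
              have hsub2 : (e ∩ h) ∩ (f ∩ h) = f ∩ h :=
                Finset.eq_of_subset_of_card_le Finset.inter_subset_right (by omega)
              exact heq (by rw [← hsub, hsub2])
            have hunion : 3 ≤ ((e ∩ h) ∪ (f ∩ h)).card := by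
              have := Finset.card_union_add_card_inter (e ∩ h) (f ∩ h)
              omega
            have hsubh : (e ∩ h) ∪ (f ∩ h) ⊆ h :=
              Finset.union_subset Finset.inter_subset_right Finset.inter_subset_right
            have hheq : (e ∩ h) ∪ (f ∩ h) = h :=
              Finset.eq_of_subset_of_card_le hsubh (by rw [huniform h hhH]; omega)
            rw [← hheq]
            exact Finset.union_subset
              (Finset.Subset.trans Finset.inter_subset_left Finset.subset_union_left)
              (Finset.Subset.trans Finset.inter_subset_left Finset.subset_union_right)
        -- g is inside e ∪ f
        have hgW : g ⊆ e ∪ f := by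
          rcases L1 g hgH heg with h | h
          · exact absurd h hpg
          · exact h
        -- g ∩ p has at most 1 element
        have hgp1 : (g ∩ p).card ≤ 1 := by
          by_contra hc
          push_neg at hc
          have : g ∩ p = p := Finset.eq_of_subset_of_card_le Finset.inter_subset_right
            (by rw [hef2]; omega)
          exact hpg (by rw [← this]; exact Finset.inter_subset_left)
        intro h hhH heh
        rcases L1 h hhH heh with hph | h'
        · -- p ⊆ h; use g to force the remaining vertex into e ∪ f
          by_cases hhg : h = g
          · subst hhg; exact absurd hph hpg
          have hgh2 : (g ∩ h).card = 2 := by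
            have hgh : HypReach H g h := Relation.ReflTransGen.trans (hsymm e g heg) heh
            rcases key g h hgh with h'' | ⟨_, _, h''⟩
            · exact absurd h''.symm hhg
            · exact h''
          have hpe : p ⊆ e := Finset.inter_subset_left
          have hcardh : h.card = 3 := huniform h hhH
          have hsd : (h \ p).card = 1 := by
            rw [Finset.card_sdiff_of_subset hph, hcardh, hef2]
          have hhdecomp : p ∪ (h \ p) = h := Finset.union_sdiff_of_subset hph
          have hghsplit : g ∩ h = (g ∩ p) ∪ (g ∩ (h \ p)) := by
            rw [← Finset.inter_union_distrib_left, hhdecomp]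
          have hcard2 : 1 ≤ (g ∩ (h \ p)).card := by
            have := Finset.card_union_le (g ∩ p) (g ∩ (h \ p))
            rw [← hghsplit, hgh2] at this
            omega
          have hsdg : h \ p ⊆ g := by
            have : g ∩ (h \ p) = h \ p := Finset.eq_of_subset_of_card_le
              Finset.inter_subset_right (by omega)
            rw [← this]
            exact Finset.inter_subset_left
          rw [← hhdecomp]
          exact Finset.union_subset (Finset.Subset.trans hpe Finset.subset_union_left)
            (Finset.Subset.trans hsdg hgW)
        · exact h'
  · -- trivial component: only e itself
    right
    push_neg at hex
    refine ⟨e, by rw [huniform e he]; omega, fun f hfH hef => ?_⟩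
    rw [hex f hfH hef]
end

section
/- A 3-uniform hypergraph on n vertices containing no loose path of length two has at most \lfloor (n+1)/4 \rfloor + 3\lfloor n/4 \rfloor edges. -/
open Finset

section Aux

variable {V : Type*} [DecidableEq V]

lemma stmt2_partner {H : Finset (Finset V)}
    (hfree : ∀ e ∈ H, ∀ f ∈ H, e ≠ f → (e ∩ f).card ≠ 1)
    {g p : Finset V} (hg : g ∈ H) (hp : p ∈ H) (hne : g ≠ p)
    {y : V} (hyg : y ∈ g) (hyp : y ∈ p) :
    ∃ z, z ≠ y ∧ z ∈ g ∧ z ∈ p := by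
  have h1 : 0 < (g ∩ p).card := card_pos.mpr ⟨y, mem_inter.mpr ⟨hyg, hyp⟩⟩
  have h2 : (g ∩ p).card ≠ 1 := hfree g hg p hp hne
  have hlt : 1 < (g ∩ p).card := by omega
  obtain ⟨z, hz, hzy⟩ := exists_mem_ne hlt y
  exact ⟨z, hzy, (mem_inter.mp hz).1, (mem_inter.mp hz).2⟩

lemma stmt2_eq_three {g : Finset V} (hg : g.card = 3) {p q r : V}
    (hp : p ∈ g) (hq : q ∈ g) (hr : r ∈ g)
    (hpq : p ≠ q) (hpr : p ≠ r) (hqr : q ≠ r) : g = {p, q, r} := by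
  have hsub : ({p, q, r} : Finset V) ⊆ g := by
    simp [insert_subset_iff, hp, hq, hr]
  have hcard : ({p, q, r} : Finset V).card = 3 := by
    rw [card_insert_of_notMem (by simp [hpq, hpr]),
        card_insert_of_notMem (by simp [hqr]), card_singleton]
  exact (eq_of_subset_of_card_le hsub (by omega)).symm

lemma stmt2_k4 {H : Finset (Finset V)}
    (h3 : ∀ e ∈ H, e.card = 3)
    (hfree : ∀ e ∈ H, ∀ f ∈ H, e ≠ f → (e ∩ f).card ≠ 1)
    {u v w x : V} (huv : u ≠ v) (huw : u ≠ w) (hux : u ≠ x)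
    (hvw : v ≠ w) (hvx : v ≠ x) (hwx : w ≠ x)
    (he : ({u, v, w} : Finset V) ∈ H)
    (hf : ({u, v, x} : Finset V) ∈ H)
    (hh : ({u, w, x} : Finset V) ∈ H) :
    ∀ g ∈ H, g ⊆ ({u, v, w, x} : Finset V) ∨ Disjoint g {u, v, w, x} := by
  intro g hg
  rw [or_iff_not_imp_right]
  intro hnd
  obtain ⟨y, hyg, hyK⟩ := not_disjoint_iff.mp hnd
  by_cases hge : g = ({u, v, w} : Finset V)
  · rw [hge]; intro z hz; simp at hz ⊢; tauto
  by_cases hgf : g = ({u, v, x} : Finset V)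
  · rw [hgf]; intro z hz; simp at hz ⊢; tauto
  by_cases hgh : g = ({u, w, x} : Finset V)
  · rw [hgh]; intro z hz; simp at hz ⊢; tauto
  have FIN : ∀ p q r : V, p ∈ g → q ∈ g → r ∈ g → p ≠ q → p ≠ r → q ≠ r →
      p ∈ ({u, v, w, x} : Finset V) → q ∈ ({u, v, w, x} : Finset V) →
      r ∈ ({u, v, w, x} : Finset V) → g ⊆ ({u, v, w, x} : Finset V) := by
    intro p q r hp hq hr hpq hpr hqr hpK hqK hrK
    rw [stmt2_eq_three (h3 g hg) hp hq hr hpq hpr hqr]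
    simp [insert_subset_iff, hpK, hqK, hrK]
  simp only [mem_insert, mem_singleton] at hyK
  rcases hyK with rfl | rfl | rfl | rfl
  · -- y = u
    obtain ⟨z1, hz1u, hz1g, hz1e⟩ := stmt2_partner hfree hg he hge hyg (by simp)
    simp only [mem_insert, mem_singleton] at hz1e
    rcases hz1e with rfl | rfl | rfl
    · exact absurd rfl hz1u
    · -- z1 = v
      obtain ⟨z3, hz3u, hz3g, hz3h⟩ := stmt2_partner hfree hg hh hgh hyg (by simp)
      simp only [mem_insert, mem_singleton] at hz3h
      rcases hz3h with rfl | rfl | rfl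
      · exact absurd rfl hz3u
      · exact FIN _ _ _ hyg hz1g hz3g huv huw hvw (by simp) (by simp) (by simp)
      · exact FIN _ _ _ hyg hz1g hz3g huv hux hvx (by simp) (by simp) (by simp)
    · -- z1 = w
      obtain ⟨z2, hz2u, hz2g, hz2f⟩ := stmt2_partner hfree hg hf hgf hyg (by simp)
      simp only [mem_insert, mem_singleton] at hz2f
      rcases hz2f with rfl | rfl | rfl
      · exact absurd rfl hz2u
      · exact FIN _ _ _ hyg hz2g hz1g huv huw hvw (by simp) (by simp) (by simp)
      · exact FIN _ _ _ hyg hz1g hz2g huw hux hwx (by simp) (by simp) (by simp)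
  · -- y = v
    obtain ⟨z1, hz1v, hz1g, hz1e⟩ := stmt2_partner hfree hg he hge hyg (by simp)
    obtain ⟨z2, hz2v, hz2g, hz2f⟩ := stmt2_partner hfree hg hf hgf hyg (by simp)
    simp only [mem_insert, mem_singleton] at hz1e hz2f
    rcases hz1e with rfl | rfl | rfl
    · -- z1 = u
      rcases hz2f with rfl | rfl | rfl
      · -- z2 = u : u ∈ g, get third from h
        obtain ⟨z3, hz3u, hz3g, hz3h⟩ := stmt2_partner hfree hg hh hgh hz1g (by simp)
        simp only [mem_insert, mem_singleton] at hz3h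
        rcases hz3h with rfl | rfl | rfl
        · exact absurd rfl hz3u
        · exact FIN _ _ _ hz1g hyg hz3g huv huw hvw (by simp) (by simp) (by simp)
        · exact FIN _ _ _ hz1g hyg hz3g huv hux hvx (by simp) (by simp) (by simp)
      · exact absurd rfl hz2v
      · exact FIN _ _ _ hz1g hyg hz2g huv hux hvx (by simp) (by simp) (by simp)
    · exact absurd rfl hz1v
    · -- z1 = w
      rcases hz2f with rfl | rfl | rfl
      · exact FIN _ _ _ hz2g hyg hz1g huv huw hvw (by simp) (by simp) (by simp)
      · exact absurd rfl hz2v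
      · exact FIN _ _ _ hyg hz1g hz2g hvw hvx hwx (by simp) (by simp) (by simp)
  · -- y = w
    obtain ⟨z1, hz1w, hz1g, hz1e⟩ := stmt2_partner hfree hg he hge hyg (by simp)
    obtain ⟨z3, hz3w, hz3g, hz3h⟩ := stmt2_partner hfree hg hh hgh hyg (by simp)
    simp only [mem_insert, mem_singleton] at hz1e hz3h
    rcases hz1e with rfl | rfl | rfl
    · -- z1 = u
      rcases hz3h with rfl | rfl | rfl
      · -- z3 = u : u ∈ g, get partner from f
        obtain ⟨z2, hz2u, hz2g, hz2f⟩ := stmt2_partner hfree hg hf hgf hz1g (by simp)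
        simp only [mem_insert, mem_singleton] at hz2f
        rcases hz2f with rfl | rfl | rfl
        · exact absurd rfl hz2u
        · exact FIN _ _ _ hz1g hz2g hyg huv huw hvw (by simp) (by simp) (by simp)
        · exact FIN _ _ _ hz1g hyg hz2g huw hux hwx (by simp) (by simp) (by simp)
      · exact absurd rfl hz3w
      · exact FIN _ _ _ hz1g hyg hz3g huw hux hwx (by simp) (by simp) (by simp)
    · -- z1 = v
      rcases hz3h with rfl | rfl | rfl
      · exact FIN _ _ _ hz3g hz1g hyg huv huw hvw (by simp) (by simp) (by simp)
      · exact absurd rfl hz3w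
      · exact FIN _ _ _ hz1g hyg hz3g hvw hvx hwx (by simp) (by simp) (by simp)
    · exact absurd rfl hz1w
  · -- y = x
    obtain ⟨z2, hz2x, hz2g, hz2f⟩ := stmt2_partner hfree hg hf hgf hyg (by simp)
    obtain ⟨z3, hz3x, hz3g, hz3h⟩ := stmt2_partner hfree hg hh hgh hyg (by simp)
    simp only [mem_insert, mem_singleton] at hz2f hz3h
    rcases hz2f with rfl | rfl | rfl
    · -- z2 = u
      rcases hz3h with rfl | rfl | rfl
      · -- z3 = u : u ∈ g, get partner from e
        obtain ⟨z1, hz1u, hz1g, hz1e⟩ := stmt2_partner hfree hg he hge hz2g (by simp)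
        simp only [mem_insert, mem_singleton] at hz1e
        rcases hz1e with rfl | rfl | rfl
        · exact absurd rfl hz1u
        · exact FIN _ _ _ hz2g hz1g hyg huv hux hvx (by simp) (by simp) (by simp)
        · exact FIN _ _ _ hz2g hz1g hyg huw hux hwx (by simp) (by simp) (by simp)
      · exact FIN _ _ _ hz2g hz3g hyg huw hux hwx (by simp) (by simp) (by simp)
      · exact absurd rfl hz3x
    · -- z2 = v
      rcases hz3h with rfl | rfl | rfl
      · exact FIN _ _ _ hz3g hz2g hyg huv hux hvx (by simp) (by simp) (by simp)
      · exact FIN _ _ _ hz2g hz3g hyg hvw hvx hwx (by simp) (by simp) (by simp)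
      · exact absurd rfl hz3x
    · exact absurd rfl hz2x

lemma stmt2_sunflower {H : Finset (Finset V)}
    (h3 : ∀ e ∈ H, e.card = 3)
    (hfree : ∀ e ∈ H, ∀ f ∈ H, e ≠ f → (e ∩ f).card ≠ 1)
    {u v w x : V} (huv : u ≠ v) (huw : u ≠ w) (hux : u ≠ x)
    (hvw : v ≠ w) (hvx : v ≠ x) (hwx : w ≠ x)
    (he : ({u, v, w} : Finset V) ∈ H)
    (hf : ({u, v, x} : Finset V) ∈ H)
    (hn1 : ({u, w, x} : Finset V) ∉ H)
    (hn2 : ({v, w, x} : Finset V) ∉ H) :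
    ∀ g ∈ H, ¬ (u ∈ g ∧ v ∈ g) →
      Disjoint g ((H.filter (fun p => u ∈ p ∧ v ∈ p)).biUnion id) := by
  intro g hg hguv
  rw [disjoint_right]
  intro y hyW hyg
  obtain ⟨p, hpP, hyp⟩ := mem_biUnion.mp hyW
  simp only [id_eq] at hyp
  rw [mem_filter] at hpP
  obtain ⟨hpH, hup, hvp⟩ := hpP
  have hgp : g ≠ p := by rintro rfl; exact hguv ⟨hup, hvp⟩
  obtain ⟨z, hzy, hzg, hzp⟩ := stmt2_partner hfree hg hpH hgp hyg hyp
  have hp3 : p.card = 3 := h3 p hpH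
  have huvp : ({u, v} : Finset V) ⊆ p := by simp [insert_subset_iff, hup, hvp]
  have huv2 : ({u, v} : Finset V).card = 2 := by
    rw [card_insert_of_notMem (by simp [huv]), card_singleton]
  have h1 : (p \ {u, v}).card = 1 := by rw [card_sdiff_of_subset huvp, hp3, huv2]
  obtain ⟨t, ht⟩ := card_eq_one.mp h1
  have htp : t ∈ p := (mem_sdiff.mp (ht ▸ mem_singleton_self t)).1
  have htuv : t ∉ ({u, v} : Finset V) := (mem_sdiff.mp (ht ▸ mem_singleton_self t)).2
  have htu : t ≠ u := by intro h; exact htuv (by simp [h])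
  have htv : t ≠ v := by intro h; exact htuv (by simp [h])
  have hpeq : p = {u, v, t} := stmt2_eq_three hp3 hup hvp htp huv htu.symm htv.symm
  have hmem : u ∈ g ∨ v ∈ g := by
    rw [hpeq] at hyp hzp
    simp only [mem_insert, mem_singleton] at hyp hzp
    rcases hyp with rfl | rfl | rfl <;> rcases hzp with rfl | rfl | rfl <;>
      first | (exact Or.inl hyg) | (exact Or.inr hyg) | (exact Or.inl hzg) |
        (exact Or.inr hzg) | (exact absurd rfl hzy)
  rcases hmem with hug | hvg
  · have hvng : v ∉ g := fun h => hguv ⟨hug, h⟩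
    have hge : g ≠ ({u, v, w} : Finset V) := by rintro rfl; exact hvng (by simp)
    have hgf : g ≠ ({u, v, x} : Finset V) := by rintro rfl; exact hvng (by simp)
    obtain ⟨z1, hz1, hz1g, hz1e⟩ := stmt2_partner hfree hg he hge hug (by simp)
    obtain ⟨z2, hz2, hz2g, hz2f⟩ := stmt2_partner hfree hg hf hgf hug (by simp)
    simp only [mem_insert, mem_singleton] at hz1e hz2f
    have hwg : w ∈ g := by
      rcases hz1e with rfl | rfl | rfl
      exacts [absurd rfl hz1, absurd hz1g hvng, hz1g]
    have hxg : x ∈ g := by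
      rcases hz2f with rfl | rfl | rfl
      exacts [absurd rfl hz2, absurd hz2g hvng, hz2g]
    exact hn1 ((stmt2_eq_three (h3 g hg) hug hwg hxg huw hux hwx) ▸ hg)
  · have hung : u ∉ g := fun h => hguv ⟨h, hvg⟩
    have hge : g ≠ ({u, v, w} : Finset V) := by rintro rfl; exact hung (by simp)
    have hgf : g ≠ ({u, v, x} : Finset V) := by rintro rfl; exact hung (by simp)
    obtain ⟨z1, hz1, hz1g, hz1e⟩ := stmt2_partner hfree hg he hge hvg (by simp)
    obtain ⟨z2, hz2, hz2g, hz2f⟩ := stmt2_partner hfree hg hf hgf hvg (by simp)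
    simp only [mem_insert, mem_singleton] at hz1e hz2f
    have hwg : w ∈ g := by
      rcases hz1e with rfl | rfl | rfl
      exacts [absurd hz1g hung, absurd rfl hz1, hz1g]
    have hxg : x ∈ g := by
      rcases hz2f with rfl | rfl | rfl
      exacts [absurd hz2g hung, absurd rfl hz2, hz2g]
    exact hn2 ((stmt2_eq_three (h3 g hg) hvg hwg hxg hvw hvx hwx) ▸ hg)

lemma stmt2_key : ∀ (n : ℕ) (A : Finset V) (H : Finset (Finset V)),
    A.card = n →
    (∀ e ∈ H, e.card = 3) →
    (∀ e ∈ H, ∀ f ∈ H, e ≠ f → (e ∩ f).card ≠ 1) →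
    (∀ e ∈ H, e ⊆ A) →
    H.card ≤ (n + 1) / 4 + 3 * (n / 4) := by
  intro n
  induction n using Nat.strong_induction_on with
  | _ n IH =>
  intro A H hA h3 hfree hsub
  rcases H.eq_empty_or_nonempty with rfl | ⟨e, he⟩
  · simp
  have he3 := h3 e he
  have heA := hsub e he
  have hnA : 3 ≤ n := by
    have := card_le_card heA
    omega
  by_cases hex : ∃ f ∈ H, f ≠ e ∧ 2 ≤ (e ∩ f).card
  · obtain ⟨f, hfH, hfe, hef2⟩ := hex
    have hf3 := h3 f hfH
    have h2 : (e ∩ f).card = 2 := by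
      have hle : (e ∩ f).card ≤ 3 := by
        have : e ∩ f ⊆ e := inter_subset_left
        have := card_le_card this
        omega
      by_contra hcon
      have h33 : (e ∩ f).card = 3 := by omega
      have hEE : e ∩ f = e :=
        eq_of_subset_of_card_le inter_subset_left (by omega)
      have hef' : e ⊆ f := hEE ▸ inter_subset_right
      exact hfe (eq_of_subset_of_card_le hef' (by omega)).symm
    obtain ⟨u, v, huv, hef⟩ := card_eq_two.mp h2
    have huef : u ∈ e ∩ f := by rw [hef]; simp
    have hvef : v ∈ e ∩ f := by rw [hef]; simp
    have hue : u ∈ e := (mem_inter.mp huef).1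
    have huf : u ∈ f := (mem_inter.mp huef).2
    have hve : v ∈ e := (mem_inter.mp hvef).1
    have hvf : v ∈ f := (mem_inter.mp hvef).2
    have huvs : ({u, v} : Finset V) ⊆ e := by simp [insert_subset_iff, hue, hve]
    have huvsf : ({u, v} : Finset V) ⊆ f := by simp [insert_subset_iff, huf, hvf]
    have huv2 : ({u, v} : Finset V).card = 2 := by
      rw [card_insert_of_notMem (by simp [huv]), card_singleton]
    obtain ⟨w, hw⟩ := card_eq_one.mp (show (e \ {u, v}).card = 1 by
      rw [card_sdiff_of_subset huvs, he3, huv2])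
    obtain ⟨x, hx⟩ := card_eq_one.mp (show (f \ {u, v}).card = 1 by
      rw [card_sdiff_of_subset huvsf, hf3, huv2])
    have hwe : w ∈ e := (mem_sdiff.mp (hw ▸ mem_singleton_self w)).1
    have hwuv : w ∉ ({u, v} : Finset V) := (mem_sdiff.mp (hw ▸ mem_singleton_self w)).2
    have hxf : x ∈ f := (mem_sdiff.mp (hx ▸ mem_singleton_self x)).1
    have hxuv : x ∉ ({u, v} : Finset V) := (mem_sdiff.mp (hx ▸ mem_singleton_self x)).2
    have huw : u ≠ w := by intro h; exact hwuv (by simp [h])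
    have hvw : v ≠ w := by intro h; exact hwuv (by simp [h])
    have hux : u ≠ x := by intro h; exact hxuv (by simp [h])
    have hvx : v ≠ x := by intro h; exact hxuv (by simp [h])
    have hwf : w ∉ f := by
      intro h
      have : w ∈ e ∩ f := mem_inter.mpr ⟨hwe, h⟩
      rw [hef] at this
      exact hwuv this
    have hxe : x ∉ e := by
      intro h
      have : x ∈ e ∩ f := mem_inter.mpr ⟨h, hxf⟩
      rw [hef] at this
      exact hxuv this
    have hwx : w ≠ x := by rintro rfl; exact hwf hxf
    have he_eq : e = {u, v, w} := stmt2_eq_three he3 hue hve hwe huv huw hvw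
    have hf_eq : f = {u, v, x} := stmt2_eq_three hf3 huf hvf hxf huv hux hvx
    have heH : ({u, v, w} : Finset V) ∈ H := he_eq ▸ he
    have hfH' : ({u, v, x} : Finset V) ∈ H := hf_eq ▸ hfH
    have huA : u ∈ A := heA hue
    have hvA : v ∈ A := heA hve
    have hwA : w ∈ A := heA hwe
    have hxA : x ∈ A := hsub f hfH hxf
    by_cases hk4 : ({u, w, x} : Finset V) ∈ H ∨ ({v, w, x} : Finset V) ∈ H
    · -- K4 case
      have hclaim : ∀ g ∈ H, g ⊆ ({u, v, w, x} : Finset V) ∨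
          Disjoint g ({u, v, w, x} : Finset V) := by
        rcases hk4 with hh | hh
        · exact stmt2_k4 h3 hfree huv huw hux hvw hvx hwx heH hfH' hh
        · have hc := stmt2_k4 h3 hfree huv.symm hvw hvx huw hux hwx
            (show ({v, u, w} : Finset V) ∈ H by rw [Finset.insert_comm]; exact heH)
            (show ({v, u, x} : Finset V) ∈ H by rw [Finset.insert_comm]; exact hfH')
            hh
          have hKK : ({v, u, w, x} : Finset V) = ({u, v, w, x} : Finset V) := by
            rw [Finset.insert_comm]
          rw [hKK] at hc
          exact hc
      have hKA : ({u, v, w, x} : Finset V) ⊆ A := by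
        simp [insert_subset_iff, huA, hvA, hwA, hxA]
      have hKcard : ({u, v, w, x} : Finset V).card = 4 := by
        rw [card_insert_of_notMem (by simp [huv, huw, hux]),
            card_insert_of_notMem (by simp [hvw, hvx]),
            card_insert_of_notMem (by simp [hwx]), card_singleton]
      have hcover : H ⊆ H.filter (fun g => g ⊆ ({u, v, w, x} : Finset V)) ∪
          H.filter (fun g => Disjoint g ({u, v, w, x} : Finset V)) := by
        intro g hg
        rcases hclaim g hg with h | h
        · exact mem_union_left _ (mem_filter.mpr ⟨hg, h⟩)
        · exact mem_union_right _ (mem_filter.mpr ⟨hg, h⟩)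
      have hH1card : (H.filter (fun g => g ⊆ ({u, v, w, x} : Finset V))).card ≤ 4 := by
        have hsub1 : H.filter (fun g => g ⊆ ({u, v, w, x} : Finset V)) ⊆
            ({u, v, w, x} : Finset V).powersetCard 3 := by
          intro g hg
          rw [mem_powersetCard]
          exact ⟨(mem_filter.mp hg).2, h3 g (mem_filter.mp hg).1⟩
        calc (H.filter (fun g => g ⊆ ({u, v, w, x} : Finset V))).card
            ≤ (({u, v, w, x} : Finset V).powersetCard 3).card := card_le_card hsub1
          _ = 4 := by rw [card_powersetCard, hKcard]; decide
      have h4n : 4 ≤ n := by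
        have := card_le_card hKA
        omega
      have hrec : (H.filter (fun g => Disjoint g ({u, v, w, x} : Finset V))).card ≤
          ((n - 4) + 1) / 4 + 3 * ((n - 4) / 4) := by
        apply IH (n - 4) (by omega) (A \ ({u, v, w, x} : Finset V))
        · rw [card_sdiff_of_subset hKA, hA, hKcard]
        · exact fun g hg => h3 g (mem_filter.mp hg).1
        · exact fun a ha b hb => hfree a (mem_filter.mp ha).1 b (mem_filter.mp hb).1
        · exact fun g hg => subset_sdiff.mpr
            ⟨hsub g (mem_filter.mp hg).1, (mem_filter.mp hg).2⟩
      have hu1 := card_le_card hcover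
      have hu2 := card_union_le (H.filter (fun g => g ⊆ ({u, v, w, x} : Finset V)))
        (H.filter (fun g => Disjoint g ({u, v, w, x} : Finset V)))
      omega
    · -- sunflower case
      push_neg at hk4
      obtain ⟨hn1, hn2⟩ := hk4
      have hclaim := stmt2_sunflower h3 hfree huv huw hux hvw hvx hwx heH hfH' hn1 hn2
      have hPW : ∀ p ∈ H.filter (fun p => u ∈ p ∧ v ∈ p),
          p ⊆ (H.filter (fun p => u ∈ p ∧ v ∈ p)).biUnion id :=
        fun p hp z hz => mem_biUnion.mpr ⟨p, hp, hz⟩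
      have heP : e ∈ H.filter (fun p => u ∈ p ∧ v ∈ p) :=
        mem_filter.mpr ⟨he, hue, hve⟩
      have hWA : (H.filter (fun p => u ∈ p ∧ v ∈ p)).biUnion id ⊆ A := by
        intro z hz
        obtain ⟨p, hp, hzp⟩ := mem_biUnion.mp hz
        exact hsub p (mem_filter.mp hp).1 hzp
      have huvW : ({u, v} : Finset V) ⊆ (H.filter (fun p => u ∈ p ∧ v ∈ p)).biUnion id := by
        intro z hz
        simp only [mem_insert, mem_singleton] at hz
        rcases hz with rfl | rfl
        · exact hPW e heP hue
        · exact hPW e heP hve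
      have huv2 : ({u, v} : Finset V).card = 2 := by
        rw [card_insert_of_notMem (by simp [huv]), card_singleton]
      have hPcard : (H.filter (fun p => u ∈ p ∧ v ∈ p)).card ≤
          ((H.filter (fun p => u ∈ p ∧ v ∈ p)).biUnion id \ {u, v}).card := by
        have h1 : (H.filter (fun p => u ∈ p ∧ v ∈ p)).card ≤
            (((H.filter (fun p => u ∈ p ∧ v ∈ p)).biUnion id \ {u, v}).powersetCard 1).card := by
          apply card_le_card_of_injOn (fun p => p \ {u, v})
          · intro p hp
            have hpm := mem_filter.mp hp
            rw [Finset.mem_coe, mem_powersetCard]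
            constructor
            · exact sdiff_subset_sdiff (hPW p hp) (Finset.Subset.refl _)
            · rw [card_sdiff_of_subset (by simp [insert_subset_iff, hpm.2.1, hpm.2.2]),
                  h3 p hpm.1, huv2]
          · intro p hp q hq hpq
            have hpm := mem_filter.mp hp
            have hqm := mem_filter.mp hq
            have hups : ({u, v} : Finset V) ⊆ p := by
              simp [insert_subset_iff, hpm.2.1, hpm.2.2]
            have huqs : ({u, v} : Finset V) ⊆ q := by
              simp [insert_subset_iff, hqm.2.1, hqm.2.2]
            have hpq' : p \ ({u, v} : Finset V) = q \ ({u, v} : Finset V) := hpq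
            rw [← sdiff_union_of_subset hups, ← sdiff_union_of_subset huqs, hpq']
        rwa [card_powersetCard, Nat.choose_one_right] at h1
      have hWsd : ((H.filter (fun p => u ∈ p ∧ v ∈ p)).biUnion id \ {u, v}).card =
          ((H.filter (fun p => u ∈ p ∧ v ∈ p)).biUnion id).card - 2 := by
        rw [card_sdiff_of_subset huvW, huv2]
      have h2W : 2 ≤ ((H.filter (fun p => u ∈ p ∧ v ∈ p)).biUnion id).card := by
        have := card_le_card huvW
        omega
      have hWn : ((H.filter (fun p => u ∈ p ∧ v ∈ p)).biUnion id).card ≤ n := by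
        have := card_le_card hWA
        omega
      have h3W : 3 ≤ ((H.filter (fun p => u ∈ p ∧ v ∈ p)).biUnion id).card := by
        have := card_le_card (hPW e heP)
        omega
      have hcover : H ⊆ H.filter (fun p => u ∈ p ∧ v ∈ p) ∪
          H.filter (fun g => Disjoint g ((H.filter (fun p => u ∈ p ∧ v ∈ p)).biUnion id)) := by
        intro g hg
        by_cases hgP : g ∈ H.filter (fun p => u ∈ p ∧ v ∈ p)
        · exact mem_union_left _ hgP
        · refine mem_union_right _ (mem_filter.mpr ⟨hg, ?_⟩)
          exact hclaim g hg (fun hc => hgP (mem_filter.mpr ⟨hg, hc⟩))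
      have hrec : (H.filter (fun g =>
          Disjoint g ((H.filter (fun p => u ∈ p ∧ v ∈ p)).biUnion id))).card ≤
          ((n - ((H.filter (fun p => u ∈ p ∧ v ∈ p)).biUnion id).card) + 1) / 4 +
          3 * ((n - ((H.filter (fun p => u ∈ p ∧ v ∈ p)).biUnion id).card) / 4) := by
        apply IH _ (by omega) (A \ (H.filter (fun p => u ∈ p ∧ v ∈ p)).biUnion id)
        · rw [card_sdiff_of_subset hWA, hA]
        · exact fun g hg => h3 g (mem_filter.mp hg).1
        · exact fun a ha b hb => hfree a (mem_filter.mp ha).1 b (mem_filter.mp hb).1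
        · exact fun g hg => subset_sdiff.mpr
            ⟨hsub g (mem_filter.mp hg).1, (mem_filter.mp hg).2⟩
      have hu1 := card_le_card hcover
      have hu2 := card_union_le (H.filter (fun p => u ∈ p ∧ v ∈ p))
        (H.filter (fun g => Disjoint g ((H.filter (fun p => u ∈ p ∧ v ∈ p)).biUnion id)))
      omega
  · -- isolated edge case
    push_neg at hex
    have hcover : H ⊆ insert e (H.filter (fun g => Disjoint g e)) := by
      intro g hg
      rcases eq_or_ne g e with rfl | hge
      · exact mem_insert_self _ _
      · refine mem_insert_of_mem (mem_filter.mpr ⟨hg, ?_⟩)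
        have h1 := hex g hg hge
        have h2 := hfree e he g hg (Ne.symm hge)
        have h0 : (e ∩ g).card = 0 := by omega
        rw [disjoint_comm]
        exact disjoint_iff_inter_eq_empty.mpr (card_eq_zero.mp h0)
    have hrec : (H.filter (fun g => Disjoint g e)).card ≤
        ((n - 3) + 1) / 4 + 3 * ((n - 3) / 4) := by
      apply IH (n - 3) (by omega) (A \ e)
      · rw [card_sdiff_of_subset heA, hA, he3]
      · exact fun g hg => h3 g (mem_filter.mp hg).1
      · exact fun a ha b hb => hfree a (mem_filter.mp ha).1 b (mem_filter.mp hb).1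
      · exact fun g hg => subset_sdiff.mpr
          ⟨hsub g (mem_filter.mp hg).1, (mem_filter.mp hg).2⟩
    have hu1 := card_le_card hcover
    have hu2 := card_insert_le e (H.filter (fun g => Disjoint g e))
    omega

end Aux

/-- A 3-uniform hypergraph on `n` vertices in which no two edges intersect in
exactly one vertex has at most `⌊(n+1)/4⌋ + 3⌊n/4⌋` edges. -/
theorem stmt_2 {V : Type*} [Fintype V] [DecidableEq V] {n : ℕ}
    (hV : Fintype.card V = n)
    (H : Finset (Finset V))
    (huniform : ∀ e ∈ H, e.card = 3)
    (hfree : ∀ e ∈ H, ∀ f ∈ H, e ≠ f → (e ∩ f).card ≠ 1) :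
    H.card ≤ (n + 1) / 4 + 3 * (n / 4) :=
  stmt2_key n Finset.univ H (by simp [hV]) huniform hfree
    (fun e _ => Finset.subset_univ e)
end

section
/- The minimum over all P^3_2-free 3-uniform hypergraphs on n \ge 4 vertices with the maximum possible number of edges of the maximum degree equals three; in particular, the 3-graph consisting of disjoint complete 3-graphs on four vertices (plus possibly one isolated edge when n \equiv 3 mod 4) is P^3_2-free, has \lfloor (n+1)/4 \rfloor + 3\lfloor n/4 \rfloor edges, and maximum degree 3. -/
/-- Degree of a vertex in a hypergraph: the number of edges containing it. -/
def hypDeg {V : Type*} [DecidableEq V] (H : Finset (Finset V)) (v : V) : ℕ :=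
  (H.filter (fun e => v ∈ e)).card

lemma inter_two {V : Type*} [DecidableEq V] {H : Finset (Finset V)}
    (h3 : ∀ e ∈ H, e.card = 3)
    (hfree : ∀ e ∈ H, ∀ f ∈ H, e ≠ f → (e ∩ f).card ≠ 1)
    {e f : Finset V} (he : e ∈ H) (hf : f ∈ H) (hne : f ≠ e)
    {v : V} (hv : v ∈ e) (hv' : v ∈ f) : (f ∩ e).card = 2 := by
  have h1 : 1 ≤ (f ∩ e).card := Finset.card_pos.2 ⟨v, Finset.mem_inter.2 ⟨hv', hv⟩⟩
  have h2 : (f ∩ e).card ≤ 3 :=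
    le_trans (Finset.card_le_card Finset.inter_subset_right) (le_of_eq (h3 e he))
  have hne1 : (f ∩ e).card ≠ 1 := hfree f hf e he hne
  have hne3 : (f ∩ e).card ≠ 3 := by
    intro h
    apply hne
    have h4 : f ∩ e = f := Finset.eq_of_subset_of_card_le Finset.inter_subset_left
      (by rw [h3 f hf, h])
    have h5 : f ∩ e = e := Finset.eq_of_subset_of_card_le Finset.inter_subset_right
      (by rw [h3 e he, h])
    rw [← h4, h5]
  omega

lemma exists_deg_one {V : Type*} [DecidableEq V] {H : Finset (Finset V)}
    (h3 : ∀ e ∈ H, e.card = 3)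
    (hfree : ∀ e ∈ H, ∀ f ∈ H, e ≠ f → (e ∩ f).card ≠ 1)
    (hdeg : ∀ v, hypDeg H v ≤ 2) {e : Finset V} (he : e ∈ H) :
    ∃ v ∈ e, hypDeg H v = 1 := by
  by_contra hc
  push_neg at hc
  have hother : ∀ v ∈ e, ∃ f, (f ∈ H ∧ f ≠ e) ∧ v ∈ f := by
    intro v hv
    have h1 : e ∈ H.filter (fun f => v ∈ f) := Finset.mem_filter.2 ⟨he, hv⟩
    have h1c : 1 ≤ (H.filter (fun f => v ∈ f)).card := Finset.card_pos.2 ⟨e, h1⟩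
    have h2 : 1 < (H.filter (fun f => v ∈ f)).card := by
      have := hc v hv; have := hdeg v; unfold hypDeg at *; omega
    obtain ⟨f, hf, hfe⟩ := Finset.exists_mem_ne h2 e
    exact ⟨f, ⟨(Finset.mem_filter.1 hf).1, hfe⟩, (Finset.mem_filter.1 hf).2⟩
  choose f hfH hvf using hother
  -- not all intersections equal
  have hcard3 : e.card = 3 := h3 e he
  have hx : ∃ x, ∃ hx : x ∈ e, ∃ y, ∃ hy : y ∈ e,
      f x hx ∩ e ≠ f y hy ∩ e := by
    by_contra hall
    push_neg at hall
    obtain ⟨a, ha⟩ : e.Nonempty := Finset.card_pos.1 (by omega)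
    have hsub : e ⊆ f a ha ∩ e := by
      intro v hv
      have := hall v hv a ha
      rw [← this]
      exact Finset.mem_inter.2 ⟨hvf v hv, hv⟩
    have h2 : (f a ha ∩ e).card = 2 :=
      inter_two h3 hfree he ((hfH a ha).1) ((hfH a ha).2) ha (hvf a ha)
    have := Finset.card_le_card hsub
    omega
  obtain ⟨x, hxe, y, hye, hxy⟩ := hx
  set fx := f x hxe with hfx
  set fy := f y hye with hfy
  have hfxH := (hfH x hxe).1
  have hfyH := (hfH y hye).1
  have hfxe := (hfH x hxe).2
  have hfye := (hfH y hye).2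
  have h2x : (fx ∩ e).card = 2 := inter_two h3 hfree he hfxH hfxe hxe (hvf x hxe)
  have h2y : (fy ∩ e).card = 2 := inter_two h3 hfree he hfyH hfye hye (hvf y hye)
  have hun : ((fx ∩ e) ∪ (fy ∩ e)).card ≤ 3 := by
    rw [← hcard3]
    exact Finset.card_le_card (Finset.union_subset Finset.inter_subset_right
      Finset.inter_subset_right)
  have hsum := Finset.card_union_add_card_inter (fx ∩ e) (fy ∩ e)
  have hint : 1 ≤ ((fx ∩ e) ∩ (fy ∩ e)).card := by omega
  obtain ⟨v, hv⟩ := Finset.card_pos.1 (by omega : 0 < ((fx ∩ e) ∩ (fy ∩ e)).card)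
  simp only [Finset.mem_inter] at hv
  obtain ⟨⟨hvfx, hve⟩, hvfy, -⟩ := hv
  have hfxfy : fx ≠ fy := by
    intro h; exact hxy (by rw [h])
  have hsub : ({e, fx, fy} : Finset (Finset V)) ⊆ H.filter (fun g => v ∈ g) := by
    intro g hg
    simp only [Finset.mem_insert, Finset.mem_singleton] at hg
    rcases hg with rfl | rfl | rfl
    · exact Finset.mem_filter.2 ⟨he, hve⟩
    · exact Finset.mem_filter.2 ⟨hfxH, hvfx⟩
    · exact Finset.mem_filter.2 ⟨hfyH, hvfy⟩
  have hc3 : ({e, fx, fy} : Finset (Finset V)).card = 3 := by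
    rw [Finset.card_insert_of_notMem (by simp only [Finset.mem_insert, Finset.mem_singleton, not_or]; exact ⟨Ne.symm hfxe, Ne.symm hfye⟩),
      Finset.card_insert_of_notMem (by simp [hfxfy]), Finset.card_singleton]
  have := Finset.card_le_card hsub
  have := hdeg v
  unfold hypDeg at *
  omega

lemma sum_deg {V : Type*} [Fintype V] [DecidableEq V] (H : Finset (Finset V))
    (h3 : ∀ e ∈ H, e.card = 3) :
    ∑ v, hypDeg H v = 3 * H.card := by
  unfold hypDeg
  simp only [Finset.card_filter]
  rw [Finset.sum_comm]
  have : ∀ e ∈ H, (∑ v : V, if v ∈ e then 1 else 0) = 3 := by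
    intro e he
    rw [Finset.sum_ite_mem]
    simp [Finset.univ_inter, h3 e he]
  rw [Finset.sum_congr rfl this, Finset.sum_const, smul_eq_mul, mul_comm]

lemma four_card_le {V : Type*} [Fintype V] [DecidableEq V] [Nonempty V]
    {H : Finset (Finset V)}
    (h3 : ∀ e ∈ H, e.card = 3)
    (hfree : ∀ e ∈ H, ∀ f ∈ H, e ≠ f → (e ∩ f).card ≠ 1)
    (hdeg : ∀ v, hypDeg H v ≤ 2) :
    4 * H.card ≤ 2 * Fintype.card V := by
  classical
  set D := Finset.univ.filter (fun v => hypDeg H v = 1) with hD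
  have hHD : H.card ≤ D.card := by
    have hch : ∀ e ∈ H, ∃ v ∈ e, hypDeg H v = 1 := fun e he =>
      exists_deg_one h3 hfree hdeg he
    choose g hg1 hg2 using hch
    set G : Finset V → V := fun e => if h : e ∈ H then g e h else Classical.arbitrary V
      with hG
    apply Finset.card_le_card_of_injOn G
    · intro e he
      simp only [hG, dif_pos (Finset.mem_coe.1 he)]
      exact Finset.mem_filter.2 ⟨Finset.mem_univ _, hg2 e he⟩
    · intro e h1 f h2 hef
      simp only [Finset.mem_coe] at h1 h2
      simp only [hG, dif_pos h1, dif_pos h2] at hef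
      have hd : hypDeg H (g e h1) = 1 := hg2 e h1
      have he' : e ∈ H.filter (fun x => g e h1 ∈ x) := Finset.mem_filter.2 ⟨h1, hg1 e h1⟩
      have hf' : f ∈ H.filter (fun x => g e h1 ∈ x) := Finset.mem_filter.2 ⟨h2, hef ▸ hg1 f h2⟩
      exact Finset.card_le_one.1 (le_of_eq hd) e he' f hf'
  have hsplit : ∑ v, (2 - hypDeg H v) + ∑ v, hypDeg H v = 2 * Fintype.card V := by
    rw [← Finset.sum_add_distrib]
    have : ∀ v : V, (2 - hypDeg H v) + hypDeg H v = 2 := fun v =>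
      Nat.sub_add_cancel (hdeg v)
    rw [Finset.sum_congr rfl (fun v _ => this v), Finset.sum_const, Finset.card_univ,
      smul_eq_mul, mul_comm]
  have hDle : D.card ≤ ∑ v, (2 - hypDeg H v) := by
    calc D.card = ∑ v ∈ D, 1 := by rw [Finset.sum_const, smul_eq_mul, mul_one]
    _ ≤ ∑ v ∈ D, (2 - hypDeg H v) := by
        apply Finset.sum_le_sum
        intro v hv
        have := (Finset.mem_filter.1 hv).2
        omega
    _ ≤ ∑ v, (2 - hypDeg H v) := Finset.sum_le_sum_of_subset (Finset.filter_subset _ _)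
  have hsd := sum_deg H h3
  omega

def grp (i : ℕ) : Finset ℕ := {4*i, 4*i+1, 4*i+2, 4*i+3}

lemma grp_card (i : ℕ) : (grp i).card = 4 := by
  rw [grp]
  rw [Finset.card_insert_of_notMem (by simp only [Finset.mem_insert, Finset.mem_singleton]; omega),
    Finset.card_insert_of_notMem (by simp only [Finset.mem_insert, Finset.mem_singleton]; omega),
    Finset.card_insert_of_notMem (by simp only [Finset.mem_singleton]; omega), Finset.card_singleton]

lemma mem_grp {m i : ℕ} : m ∈ grp i ↔ 4*i ≤ m ∧ m ≤ 4*i+3 := by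
  simp [grp]; omega

def H0 (n : ℕ) : Finset (Finset ℕ) :=
  (Finset.range (n/4)).biUnion (fun i => (grp i).powersetCard 3) ∪
  (if n % 4 = 3 then {({n-3, n-2, n-1} : Finset ℕ)} else ∅)

lemma extra_card {n : ℕ} (h : n % 4 = 3) : ({n-3, n-2, n-1} : Finset ℕ).card = 3 := by
  rw [Finset.card_insert_of_notMem (by simp only [Finset.mem_insert, Finset.mem_singleton]; omega),
    Finset.card_insert_of_notMem (by simp only [Finset.mem_singleton]; omega), Finset.card_singleton]

lemma mem_H0 {n : ℕ} {e : Finset ℕ} :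
    e ∈ H0 n ↔ (∃ i < n/4, e ⊆ grp i ∧ e.card = 3) ∨
      (n % 4 = 3 ∧ e = {n-3, n-2, n-1}) := by
  unfold H0
  by_cases h : n % 4 = 3 <;>
    simp [h, Finset.mem_biUnion, Finset.mem_powersetCard, and_comm] <;> exact or_comm

lemma H0_card3 {n : ℕ} : ∀ e ∈ H0 n, e.card = 3 := by
  intro e he
  rcases mem_H0.1 he with ⟨i, _, _, h⟩ | ⟨h3, rfl⟩
  · exact h
  · exact extra_card h3

lemma H0_free {n : ℕ} : ∀ e ∈ H0 n, ∀ f ∈ H0 n, e ≠ f → (e ∩ f).card ≠ 1 := by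
  intro e he f hf hne
  rcases mem_H0.1 he with ⟨i, hi, hei, he3⟩ | ⟨h3, rfl⟩ <;>
    rcases mem_H0.1 hf with ⟨j, hj, hfj, hf3⟩ | ⟨h3', rfl⟩
  · by_cases h : i = j
    · -- same group: intersection has card 2
      subst h
      have hun : (e ∪ f).card ≤ 4 := by
        rw [← grp_card i]
        exact Finset.card_le_card (Finset.union_subset hei hfj)
      have hsum := Finset.card_union_add_card_inter e f
      have hle : (e ∩ f).card ≤ 3 := le_trans (Finset.card_le_card Finset.inter_subset_left) he3.le
      omega
    · -- different groups: disjoint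
      have : e ∩ f = ∅ := by
        rw [Finset.eq_empty_iff_forall_notMem]
        intro m hm
        have h1 := mem_grp.1 (hei (Finset.mem_inter.1 hm).1)
        have h2 := mem_grp.1 (hfj (Finset.mem_inter.1 hm).2)
        omega
      rw [this, Finset.card_empty]
      omega
  · have : e ∩ ({n-3, n-2, n-1} : Finset ℕ) = ∅ := by
      rw [Finset.eq_empty_iff_forall_notMem]
      intro m hm
      obtain ⟨h1, h2⟩ := Finset.mem_inter.1 hm
      have h3 := mem_grp.1 (hei h1)
      simp only [Finset.mem_insert, Finset.mem_singleton] at h2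
      omega
    rw [this, Finset.card_empty]
    omega
  · have : ({n-3, n-2, n-1} : Finset ℕ) ∩ f = ∅ := by
      rw [Finset.eq_empty_iff_forall_notMem]
      intro m hm
      obtain ⟨h1, h2⟩ := Finset.mem_inter.1 hm
      have h3 := mem_grp.1 (hfj h2)
      simp only [Finset.mem_insert, Finset.mem_singleton] at h1
      omega
    rw [this, Finset.card_empty]
    omega
  · exact absurd rfl hne

lemma H0_card {n : ℕ} (hn : 4 ≤ n) :
    (H0 n).card = (n + 1) / 4 + 3 * (n / 4) := by
  unfold H0
  have hbu : ((Finset.range (n/4)).biUnion (fun i => (grp i).powersetCard 3)).card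
      = 4 * (n/4) := by
    rw [Finset.card_biUnion]
    · have : ∀ i ∈ Finset.range (n/4), ((grp i).powersetCard 3).card = 4 := by
        intro i _
        rw [Finset.card_powersetCard, grp_card]
        decide
      rw [Finset.sum_congr rfl this, Finset.sum_const, Finset.card_range, smul_eq_mul,
        mul_comm]
    · intro i _ j _ hij
      rw [Function.onFun, Finset.disjoint_left]
      intro s hs hs'
      rw [Finset.mem_powersetCard] at hs hs'
      obtain ⟨m, hm⟩ := Finset.card_pos.1 (by rw [hs.2]; omega : 0 < s.card)
      have h1 := mem_grp.1 (hs.1 hm)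
      have h2 := mem_grp.1 (hs'.1 hm)
      omega
  by_cases h : n % 4 = 3
  · rw [if_pos h, Finset.card_union_of_disjoint, hbu, Finset.card_singleton]
    · omega
    · rw [Finset.disjoint_right]
      intro s hs hs'
      simp only [Finset.mem_singleton] at hs
      subst hs
      rw [Finset.mem_biUnion] at hs'
      obtain ⟨i, hi, hmem⟩ := hs'
      rw [Finset.mem_powersetCard] at hmem
      have : n - 1 ∈ ({n-3, n-2, n-1} : Finset ℕ) := by simp
      have h2 := mem_grp.1 (hmem.1 this)
      rw [Finset.mem_range] at hi
      omega
  · rw [if_neg h, Finset.union_empty, hbu]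
    omega

lemma deg_pow {v : ℕ} {g : Finset ℕ} (hv : v ∈ g) (hg : g.card = 4) :
    ((g.powersetCard 3).filter (fun e => v ∈ e)).card = 3 := by
  have key : (g.powersetCard 3).filter (fun e => v ∈ e)
      = (g.powersetCard 3).erase (g.erase v) := by
    ext s
    simp only [Finset.mem_filter, Finset.mem_erase, Finset.mem_powersetCard]
    constructor
    · rintro ⟨⟨hs, hc⟩, hvs⟩
      refine ⟨?_, hs, hc⟩
      intro h
      rw [h] at hvs
      exact (Finset.notMem_erase v g) hvs
    · rintro ⟨hne, hs, hc⟩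
      refine ⟨⟨hs, hc⟩, ?_⟩
      by_contra hvs
      apply hne
      apply Finset.eq_of_subset_of_card_le
      · intro x hx
        exact Finset.mem_erase.2 ⟨fun h => hvs (h ▸ hx), hs hx⟩
      · rw [Finset.card_erase_of_mem hv, hg, hc]
  have hmem : g.erase v ∈ Finset.powersetCard 3 g := by
    rw [Finset.mem_powersetCard]
    exact ⟨Finset.erase_subset _ _, by rw [Finset.card_erase_of_mem hv, hg]⟩
  rw [key, Finset.card_erase_of_mem hmem, Finset.card_powersetCard, hg]
  decide

lemma deg_H0_lo {n v : ℕ} (hv : v < 4 * (n / 4)) : hypDeg (H0 n) v = 3 := by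
  have hkey : (H0 n).filter (fun e => v ∈ e)
      = ((grp (v/4)).powersetCard 3).filter (fun e => v ∈ e) := by
    ext e
    simp only [Finset.mem_filter, Finset.mem_powersetCard]
    constructor
    · rintro ⟨he, hve⟩
      refine ⟨⟨?_, ?_⟩, hve⟩
      · rcases mem_H0.1 he with ⟨i, hi, hei, he3⟩ | ⟨h3, rfl⟩
        · have hvi := mem_grp.1 (hei hve)
          have : i = v / 4 := by omega
          rw [← this]; exact hei
        · exfalso
          simp only [Finset.mem_insert, Finset.mem_singleton] at hve
          omega
      · exact H0_card3 e he
    · rintro ⟨⟨hs, hc⟩, hve⟩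
      refine ⟨mem_H0.2 (Or.inl ⟨v/4, by omega, hs, hc⟩), hve⟩
  unfold hypDeg
  rw [hkey]
  exact deg_pow (mem_grp.2 (by omega)) (grp_card _)

lemma deg_H0_hi {n v : ℕ} (hv : 4 * (n / 4) ≤ v) : hypDeg (H0 n) v ≤ 1 := by
  have hsub : (H0 n).filter (fun e => v ∈ e)
      ⊆ (if n % 4 = 3 then {({n-3, n-2, n-1} : Finset ℕ)} else ∅) := by
    intro e he
    obtain ⟨heH, hve⟩ := Finset.mem_filter.1 he
    rcases mem_H0.1 heH with ⟨i, hi, hei, he3⟩ | ⟨h3, rfl⟩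
    · exfalso
      have := mem_grp.1 (hei hve)
      omega
    · rw [if_pos h3]
      exact Finset.mem_singleton.2 rfl
  calc hypDeg (H0 n) v ≤ (if n % 4 = 3 then ({({n-3, n-2, n-1} : Finset ℕ)} : Finset (Finset ℕ)) else ∅).card :=
        Finset.card_le_card hsub
    _ ≤ 1 := by by_cases h : n % 4 = 3 <;> simp [h]

lemma H0_bdd {n : ℕ} : ∀ e ∈ H0 n, ∀ m ∈ e, m < n := by
  intro e he m hm
  rcases mem_H0.1 he with ⟨i, hi, hei, -⟩ | ⟨h3, rfl⟩
  · have := mem_grp.1 (hei hm)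
    omega
  · simp only [Finset.mem_insert, Finset.mem_singleton] at hm
    omega

/-- For `n ≥ 4`, among all `P^3_2`-free 3-uniform hypergraphs on `n` vertices
with the maximum possible number `⌊(n+1)/4⌋ + 3⌊n/4⌋` of edges, the minimum of
the maximum degree equals three: there is such a hypergraph with maximum degree
exactly 3, and every such hypergraph has a vertex of degree at least 3. -/
theorem stmt_3 {V : Type*} [Fintype V] [DecidableEq V] {n : ℕ}
    (hn : 4 ≤ n) (hV : Fintype.card V = n) :
    (∃ H : Finset (Finset V),
      (∀ e ∈ H, e.card = 3) ∧
      (∀ e ∈ H, ∀ f ∈ H, e ≠ f → (e ∩ f).card ≠ 1) ∧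
      H.card = (n + 1) / 4 + 3 * (n / 4) ∧
      (∀ v : V, hypDeg H v ≤ 3) ∧ (∃ v : V, hypDeg H v = 3)) ∧
    (∀ H : Finset (Finset V),
      (∀ e ∈ H, e.card = 3) →
      (∀ e ∈ H, ∀ f ∈ H, e ≠ f → (e ∩ f).card ≠ 1) →
      H.card = (n + 1) / 4 + 3 * (n / 4) →
      ∃ v : V, 3 ≤ hypDeg H v) := by
  have hn0 : 0 < n := by omega
  have hne : Nonempty V := Fintype.card_pos_iff.1 (by omega)
  constructor
  · -- construction
    obtain ⟨σ⟩ : Nonempty (Fin n ≃ V) := by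
      rw [← Fintype.card_eq]
      simp [hV]
    set ψ : ℕ → V := fun m => σ ⟨m % n, Nat.mod_lt _ hn0⟩ with hψdef
    have hψinj : ∀ a, a < n → ∀ b, b < n → ψ a = ψ b → a = b := by
      intro a ha b hb h
      have := σ.injective h
      have h2 := Fin.mk.injEq (a % n) _ (b % n) _ ▸ this
      have : a % n = b % n := Fin.mk.inj_iff.1 this
      rwa [Nat.mod_eq_of_lt ha, Nat.mod_eq_of_lt hb] at this
    have hψsurj : ∀ v : V, ∃ m, m < n ∧ ψ m = v := by
      intro v
      refine ⟨(σ.symm v : Fin n).val, (σ.symm v).isLt, ?_⟩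
      have hfix : (⟨(σ.symm v : Fin n).val % n, Nat.mod_lt _ hn0⟩ : Fin n) = σ.symm v :=
        Fin.ext (Nat.mod_eq_of_lt (σ.symm v).isLt)
      simp only [hψdef]
      rw [hfix]
      simp
    have hdegeq : ∀ m, m < n →
        hypDeg ((H0 n).image (fun e => e.image ψ)) (ψ m) = hypDeg (H0 n) m := by
      intro m hm
      unfold hypDeg
      have himg : ((H0 n).image (fun e => e.image ψ)).filter (fun e => ψ m ∈ e)
          = ((H0 n).filter (fun e => m ∈ e)).image (fun e => e.image ψ) := by
        ext g
        simp only [Finset.mem_filter, Finset.mem_image]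
        constructor
        · rintro ⟨⟨e0, he0, rfl⟩, hmem⟩
          refine ⟨e0, ⟨he0, ?_⟩, rfl⟩
          obtain ⟨b, hb, hba⟩ := Finset.mem_image.1 hmem
          rwa [hψinj b (H0_bdd e0 he0 b hb) m hm hba] at hb
        · rintro ⟨e0, ⟨he0H, hme0⟩, rfl⟩
          exact ⟨⟨e0, he0H, rfl⟩, Finset.mem_image_of_mem ψ hme0⟩
      rw [himg]
      apply Finset.card_image_of_injOn
      intro e0 he0 f0 hf0 h
      simp only [Finset.coe_filter, Set.mem_setOf_eq] at he0 hf0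
      have h' : e0.image ψ = f0.image ψ := h
      apply Finset.Subset.antisymm
      · intro a ha
        have : ψ a ∈ f0.image ψ := h' ▸ Finset.mem_image_of_mem ψ ha
        obtain ⟨b, hb, hba⟩ := Finset.mem_image.1 this
        rwa [hψinj b (H0_bdd f0 hf0.1 b hb) a (H0_bdd e0 he0.1 a ha) hba] at hb
      · intro a ha
        have : ψ a ∈ e0.image ψ := h' ▸ Finset.mem_image_of_mem ψ ha
        obtain ⟨b, hb, hba⟩ := Finset.mem_image.1 this
        rwa [hψinj b (H0_bdd e0 he0.1 b hb) a (H0_bdd f0 hf0.1 a ha) hba] at hb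
    refine ⟨(H0 n).image (fun e => e.image ψ), ?_, ?_, ?_, ?_, ?_⟩
    · -- 3-uniform
      intro e he
      obtain ⟨e0, he0, rfl⟩ := Finset.mem_image.1 he
      rw [Finset.card_image_of_injOn, H0_card3 e0 he0]
      intro a ha b hb h
      exact hψinj a (H0_bdd e0 he0 a ha) b (H0_bdd e0 he0 b hb) h
    · -- P32-free
      intro e he f hf hnef
      obtain ⟨e0, he0, rfl⟩ := Finset.mem_image.1 he
      obtain ⟨f0, hf0, rfl⟩ := Finset.mem_image.1 hf
      have hinjU : Set.InjOn ψ (↑e0 ∪ ↑f0) := by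
        intro a ha b hb h
        simp only [Set.mem_union, Finset.mem_coe] at ha hb
        have hal : a < n := by
          rcases ha with h' | h'
          exacts [H0_bdd e0 he0 a h', H0_bdd f0 hf0 a h']
        have hbl : b < n := by
          rcases hb with h' | h'
          exacts [H0_bdd e0 he0 b h', H0_bdd f0 hf0 b h']
        exact hψinj a hal b hbl h
      rw [← Finset.image_inter_of_injOn _ _ hinjU]
      rw [Finset.card_image_of_injOn (hinjU.mono (by
        simp only [Finset.coe_inter]
        exact Set.inter_subset_left.trans Set.subset_union_left))]
      have hne0 : e0 ≠ f0 := fun h => hnef (by rw [h])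
      exact H0_free e0 he0 f0 hf0 hne0
    · -- card
      rw [Finset.card_image_of_injOn, H0_card hn]
      intro e0 he0 f0 hf0 h
      simp only [Finset.mem_coe] at he0 hf0
      have h' : e0.image ψ = f0.image ψ := h
      apply Finset.Subset.antisymm
      · intro a ha
        have : ψ a ∈ f0.image ψ := h' ▸ Finset.mem_image_of_mem ψ ha
        obtain ⟨b, hb, hba⟩ := Finset.mem_image.1 this
        rwa [hψinj b (H0_bdd f0 hf0 b hb) a (H0_bdd e0 he0 a ha) hba] at hb
      · intro a ha
        have : ψ a ∈ e0.image ψ := h' ▸ Finset.mem_image_of_mem ψ ha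
        obtain ⟨b, hb, hba⟩ := Finset.mem_image.1 this
        rwa [hψinj b (H0_bdd e0 he0 b hb) a (H0_bdd f0 hf0 a ha) hba] at hb
    · -- degrees ≤ 3
      intro v
      obtain ⟨m, hm, rfl⟩ := hψsurj v
      rw [hdegeq m hm]
      rcases lt_or_ge m (4 * (n / 4)) with h | h
      · exact le_of_eq (deg_H0_lo h)
      · exact le_trans (deg_H0_hi h) (by omega)
    · -- exists degree 3
      refine ⟨ψ 0, ?_⟩
      rw [hdegeq 0 (by omega)]
      exact deg_H0_lo (by omega)
  · -- lower bound on max degree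
    intro H h3 hfree hcard
    by_contra hcon
    push_neg at hcon
    have hdeg : ∀ v, hypDeg H v ≤ 2 := fun v => by have := hcon v; omega
    have := four_card_le h3 hfree hdeg
    rw [hcard, hV] at this
    omega
end

section
/- For every n \ge 4 there exists a 4-uniform hypergraph on n vertices with \binom{\lfloor n/2 \rfloor}{2} edges that contains no loose path of length two and has maximum degree \lfloor n/2 \rfloor - 1. -/
/-- The pair of vertices `{2i, 2i+1}` (as vertices `v` with `v/2 = i`). -/
def prHG (n i : ℕ) : Finset (Fin n) := Finset.univ.filter (fun v => (v : ℕ) / 2 = i)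

lemma mem_prHG {n i : ℕ} {v : Fin n} : v ∈ prHG n i ↔ (v : ℕ) / 2 = i := by
  simp [prHG]

lemma mem_edgeHG {n : ℕ} {s : Finset ℕ} {v : Fin n} :
    v ∈ s.biUnion (prHG n) ↔ (v : ℕ) / 2 ∈ s := by
  simp only [Finset.mem_biUnion, mem_prHG]
  constructor
  · rintro ⟨i, hi, rfl⟩; exact hi
  · intro h; exact ⟨_, h, rfl⟩

lemma card_prHG {n i : ℕ} (h : 2 * i + 1 < n) : (prHG n i).card = 2 := by
  have : prHG n i = {⟨2 * i, by omega⟩, ⟨2 * i + 1, h⟩} := by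
    ext v
    simp only [mem_prHG, Finset.mem_insert, Finset.mem_singleton, Fin.ext_iff]
    omega
  rw [this, Finset.card_insert_of_notMem (by simp [Fin.ext_iff]),
    Finset.card_singleton]

lemma edge_inj {n : ℕ} {s t : Finset ℕ} (hs : ∀ i ∈ s, 2 * i + 1 < n)
    (ht : ∀ i ∈ t, 2 * i + 1 < n)
    (h : s.biUnion (prHG n) = t.biUnion (prHG n)) : s = t := by
  have key : ∀ (a b : Finset ℕ), (∀ i ∈ a, 2 * i + 1 < n) →
      a.biUnion (prHG n) = b.biUnion (prHG n) → ∀ i ∈ a, i ∈ b := by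
    intro a b ha hab i hi
    have h2 : 2 * i < n := by have := ha i hi; omega
    have e2 : ((⟨2 * i, h2⟩ : Fin n) : ℕ) / 2 = i := by
      show 2 * i / 2 = i; omega
    have hv : (⟨2 * i, h2⟩ : Fin n) ∈ a.biUnion (prHG n) := by
      rw [mem_edgeHG, e2]; exact hi
    rw [hab, mem_edgeHG, e2] at hv
    exact hv
  exact Finset.Subset.antisymm (fun i hi => key s t hs h i hi)
    (fun i hi => key t s ht h.symm i hi)

lemma card_edgeHG {n : ℕ} {s : Finset ℕ} (hs : s.card = 2)
    (h : ∀ i ∈ s, 2 * i + 1 < n) : (s.biUnion (prHG n)).card = 4 := by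
  rw [Finset.card_biUnion]
  · rw [Finset.sum_congr rfl (fun i hi => card_prHG (h i hi)), Finset.sum_const, hs]
    rfl
  · intro i hi j hj hij
    rw [Function.onFun, Finset.disjoint_left]
    intro v hv hv'
    rw [mem_prHG] at hv hv'
    omega

/-- For every `n ≥ 4` there is a 4-uniform hypergraph on `n` vertices with
`C(⌊n/2⌋, 2)` edges, no two of whose edges intersect in exactly one vertex
(i.e. `P^4_2`-free), whose maximum degree is `⌊n/2⌋ - 1`. -/
theorem stmt_4 (n : ℕ) (hn : 4 ≤ n) :
    ∃ H : Finset (Finset (Fin n)),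
      (∀ e ∈ H, e.card = 4) ∧
      (∀ e ∈ H, ∀ f ∈ H, e ≠ f → (e ∩ f).card ≠ 1) ∧
      H.card = Nat.choose (n / 2) 2 ∧
      (∀ v, hypDeg H v ≤ n / 2 - 1) ∧ (∃ v, hypDeg H v = n / 2 - 1) := by
  set m := n / 2 with hm
  have hm2 : 2 ≤ m := by omega
  have hbound : ∀ i, i < m → 2 * i + 1 < n := by omega
  set H : Finset (Finset (Fin n)) :=
    (Finset.powersetCard 2 (Finset.range m)).image (fun s => s.biUnion (prHG n)) with hH
  have hmemH : ∀ e, e ∈ H ↔ ∃ s, s ⊆ Finset.range m ∧ s.card = 2 ∧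
      e = s.biUnion (prHG n) := by
    intro e
    simp only [hH, Finset.mem_image, Finset.mem_powersetCard]
    constructor
    · rintro ⟨s, ⟨h1, h2⟩, rfl⟩; exact ⟨s, h1, h2, rfl⟩
    · rintro ⟨s, h1, h2, rfl⟩; exact ⟨s, ⟨h1, h2⟩, rfl⟩
  have hbs : ∀ s : Finset ℕ, s ⊆ Finset.range m → ∀ i ∈ s, 2 * i + 1 < n := by
    intro s hsub i hi
    have := hsub hi
    rw [Finset.mem_range] at this
    exact hbound i this
  have hdegeq : ∀ v : Fin n, (v : ℕ) / 2 < m → hypDeg H v = m - 1 := by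
    intro v hlt
    unfold hypDeg
    have hfil : H.filter (fun e => v ∈ e) =
        ((Finset.range m).erase ((v : ℕ) / 2)).image
          (fun j => ({(v : ℕ) / 2, j} : Finset ℕ).biUnion (prHG n)) := by
      ext e
      simp only [Finset.mem_filter, Finset.mem_image, Finset.mem_erase]
      constructor
      · rintro ⟨he, hve⟩
        obtain ⟨s, hsub, hcs, rfl⟩ := (hmemH e).mp he
        rw [mem_edgeHG] at hve
        obtain ⟨a, b, hab, hsab⟩ := Finset.card_eq_two.mp hcs
        rcases (by rw [hsab] at hve; simpa using hve :
            (v : ℕ) / 2 = a ∨ (v : ℕ) / 2 = b) with h | h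
        · refine ⟨b, ⟨?_, ?_⟩, by rw [hsab, h]⟩
          · rw [← h] at hab; exact fun hc => hab hc.symm
          · exact hsub (by rw [hsab]; simp)
        · refine ⟨a, ⟨?_, ?_⟩, by rw [hsab, h, Finset.pair_comm]⟩
          · rw [← h] at hab; exact fun hc => hab hc
          · exact hsub (by rw [hsab]; simp)
      · rintro ⟨j, ⟨hjne, hjm⟩, rfl⟩
        constructor
        · rw [hmemH]
          refine ⟨{(v : ℕ) / 2, j}, ?_, ?_, rfl⟩
          · intro x hx
            simp only [Finset.mem_insert, Finset.mem_singleton] at hx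
            rcases hx with rfl | rfl
            · exact Finset.mem_range.mpr hlt
            · exact hjm
          · exact Finset.card_pair (fun hc => hjne hc.symm)
        · rw [mem_edgeHG]; simp
    rw [hfil, Finset.card_image_of_injOn, Finset.card_erase_of_mem
      (Finset.mem_range.mpr hlt), Finset.card_range]
    intro a ha b hb heq
    have ha' := Finset.mem_coe.mp ha
    have hb' := Finset.mem_coe.mp hb
    rw [Finset.mem_erase, Finset.mem_range] at ha' hb'
    have hsubs : ∀ c : ℕ, c ≠ (v : ℕ)/2 → c < m →
        ∀ i ∈ ({(v : ℕ)/2, c} : Finset ℕ), 2 * i + 1 < n := by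
      intro c _ hc i hi
      simp only [Finset.mem_insert, Finset.mem_singleton] at hi
      rcases hi with rfl | rfl
      · exact hbound _ hlt
      · exact hbound _ hc
    have := edge_inj (hsubs a ha'.1 ha'.2) (hsubs b hb'.1 hb'.2) heq
    have hmem : a ∈ ({(v : ℕ)/2, b} : Finset ℕ) := by
      rw [← this]; simp
    simp only [Finset.mem_insert, Finset.mem_singleton] at hmem
    rcases hmem with h | h
    · exact absurd h ha'.1
    · exact h

  refine ⟨H, ?_, ?_, ?_, ?_, ?_⟩
  · -- 4-uniform
    intro e he
    obtain ⟨s, hsub, hcard, rfl⟩ := (hmemH e).mp he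
    exact card_edgeHG hcard (hbs s hsub)
  · -- no two edges meet in exactly one vertex
    intro e he f hf hef hcard1
    obtain ⟨s, hsub, hcs, rfl⟩ := (hmemH e).mp he
    obtain ⟨t, htub, hct, rfl⟩ := (hmemH f).mp hf
    obtain ⟨v, hv⟩ := Finset.card_eq_one.mp hcard1
    have hvmem : v ∈ s.biUnion (prHG n) ∩ t.biUnion (prHG n) := by
      rw [hv]; exact Finset.mem_singleton_self v
    rw [Finset.mem_inter, mem_edgeHG, mem_edgeHG] at hvmem
    set i := (v : ℕ) / 2 with hi
    have hiless : i < m := by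
      have := hsub hvmem.1
      rwa [Finset.mem_range] at this
    have h2 : 2 * i + 1 < n := hbound i hiless
    have e1 : ((⟨2 * i, by omega⟩ : Fin n) : ℕ) / 2 = i := by
      show 2 * i / 2 = i; omega
    have e2 : ((⟨2 * i + 1, h2⟩ : Fin n) : ℕ) / 2 = i := by
      show (2 * i + 1) / 2 = i; omega
    have hw1 : (⟨2 * i, by omega⟩ : Fin n) ∈ s.biUnion (prHG n) ∩ t.biUnion (prHG n) := by
      rw [Finset.mem_inter, mem_edgeHG, mem_edgeHG, e1]
      exact hvmem
    have hw2 : (⟨2 * i + 1, h2⟩ : Fin n) ∈ s.biUnion (prHG n) ∩ t.biUnion (prHG n) := by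
      rw [Finset.mem_inter, mem_edgeHG, mem_edgeHG, e2]
      exact hvmem
    rw [hv, Finset.mem_singleton] at hw1 hw2
    have : (⟨2 * i, by omega⟩ : Fin n) = (⟨2 * i + 1, h2⟩ : Fin n) := hw1.trans hw2.symm
    simp [Fin.ext_iff] at this
  · -- number of edges
    rw [hH, Finset.card_image_of_injOn, Finset.card_powersetCard, Finset.card_range]
    intro s hs t ht heq
    rw [Finset.mem_coe, Finset.mem_powersetCard] at hs ht
    exact edge_inj (hbs s hs.1) (hbs t ht.1) heq
  · -- max degree upper bound
    intro v
    by_cases hlt : (v : ℕ) / 2 < m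
    · have := hdegeq v hlt
      omega
    · -- vertex in no pair: degree 0
      have : H.filter (fun e => v ∈ e) = ∅ := by
        rw [Finset.filter_eq_empty_iff]
        intro e he hve
        obtain ⟨s, hsub, hcs, rfl⟩ := (hmemH e).mp he
        rw [mem_edgeHG] at hve
        have := hsub hve
        rw [Finset.mem_range] at this
        exact hlt this
      unfold hypDeg
      rw [this]
      simp
  · -- a vertex of maximum degree: vertex 0
    refine ⟨⟨0, by omega⟩, hdegeq _ ?_⟩
    show (0 : ℕ) / 2 < m
    omega
end

section
/- For every n \ge 4 there exists a 3-uniform hypergraph on n vertices with \lfloor n^2/8 \rfloor edges that contains no loose path of length three and has maximum degree at most \lceil n/2 \rceil. -/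
/-- `H` contains no loose path of length three: three edges on 7 vertices with
consecutive edges sharing exactly one vertex and outer edges disjoint. -/
def P33Free {V : Type*} [DecidableEq V] (H : Finset (Finset V)) : Prop :=
  ¬ ∃ e₁ e₂ e₃ : Finset V, e₁ ∈ H ∧ e₂ ∈ H ∧ e₃ ∈ H ∧
    (e₁ ∪ e₂ ∪ e₃).card = 7 ∧ (e₁ ∩ e₂).card = 1 ∧ (e₂ ∩ e₃).card = 1 ∧
    e₁ ∩ e₃ = ∅

/-- For every `n ≥ 4` there is a 3-uniform hypergraph on `n` vertices with
`⌊n²/8⌋` edges, no loose path of length three, and maximum degree at most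
`⌈n/2⌉`. -/
theorem stmt_6 (n : ℕ) (hn : 4 ≤ n) :
    ∃ H : Finset (Finset (Fin n)),
      (∀ e ∈ H, e.card = 3) ∧
      P33Free H ∧
      H.card = n ^ 2 / 8 ∧
      (∀ v, hypDeg H v ≤ (n + 1) / 2) := by
  have hn0 : 0 < n := by omega
  set s : ℕ := (n + 2) / 4 with hs_def
  set t : ℕ := n - 2 * s with ht_def
  have hst : 2 * s + t = n := by omega
  have hs1 : 1 ≤ s := by omega
  have ht1 : 1 ≤ t := by omega
  set F : ℕ → Fin n := fun m => ⟨m % n, Nat.mod_lt _ hn0⟩ with hF_def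
  have hFval : ∀ m, m < n → ((F m : Fin n) : ℕ) = m := fun m hm => Nat.mod_eq_of_lt hm
  set E : ℕ × ℕ → Finset (Fin n) :=
    fun p => {F (2 * p.1), F (2 * p.1 + 1), F (2 * s + p.2)} with hE_def
  set H : Finset (Finset (Fin n)) := (Finset.range s ×ˢ Finset.range t).image E with hH_def
  have hmemE : ∀ i j : ℕ, i < s → j < t → ∀ v : Fin n,
      (v ∈ E (i, j) ↔ (v : ℕ) = 2 * i ∨ (v : ℕ) = 2 * i + 1 ∨ (v : ℕ) = 2 * s + j) := by
    intro i j hi hj v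
    have h1 : 2 * i < n := by omega
    have h2 : 2 * i + 1 < n := by omega
    have h3 : 2 * s + j < n := by omega
    simp only [hE_def, Finset.mem_insert, Finset.mem_singleton]
    constructor
    · rintro (rfl | rfl | rfl)
      · exact Or.inl (hFval _ h1)
      · exact Or.inr (Or.inl (hFval _ h2))
      · exact Or.inr (Or.inr (hFval _ h3))
    · rintro (h | h | h)
      · exact Or.inl (Fin.ext (by rw [hFval _ h1]; exact h))
      · exact Or.inr (Or.inl (Fin.ext (by rw [hFval _ h2]; exact h)))
      · exact Or.inr (Or.inr (Fin.ext (by rw [hFval _ h3]; exact h)))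
  have hmemH : ∀ e : Finset (Fin n),
      e ∈ H ↔ ∃ i j : ℕ, i < s ∧ j < t ∧ e = E (i, j) := by
    intro e
    simp only [hH_def, Finset.mem_image, Finset.mem_product, Finset.mem_range, Prod.exists]
    constructor
    · rintro ⟨i, j, ⟨hi, hj⟩, rfl⟩; exact ⟨i, j, hi, hj, rfl⟩
    · rintro ⟨i, j, hi, hj, rfl⟩; exact ⟨i, j, ⟨hi, hj⟩, rfl⟩
  -- key intersection lemma
  have hinter : ∀ i j i' j' : ℕ, i < s → j < t → i' < s → j' < t →
      (E (i, j) ∩ E (i', j')).card = 1 → j = j' := by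
    intro i j i' j' hi hj hi' hj' hcard
    by_contra hjj
    rcases eq_or_ne i i' with rfl | hii
    · -- both pair vertices in intersection, so card ≥ 2
      have hsub : ({F (2 * i), F (2 * i + 1)} : Finset (Fin n)) ⊆ E (i, j) ∩ E (i, j') := by
        intro v hv
        simp only [Finset.mem_insert, Finset.mem_singleton] at hv
        rw [Finset.mem_inter, hmemE i j hi hj, hmemE i j' hi hj']
        rcases hv with rfl | rfl
        · exact ⟨Or.inl (hFval _ (by omega)), Or.inl (hFval _ (by omega))⟩
        · exact ⟨Or.inr (Or.inl (hFval _ (by omega))), Or.inr (Or.inl (hFval _ (by omega)))⟩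
      have hne : F (2 * i) ≠ F (2 * i + 1) := by
        intro h
        have := congrArg Fin.val h
        rw [hFval _ (by omega), hFval _ (by omega)] at this
        omega
      have h2le : 2 ≤ (E (i, j) ∩ E (i, j')).card := by
        calc 2 = ({F (2 * i), F (2 * i + 1)} : Finset (Fin n)).card := by
                  rw [Finset.card_insert_of_notMem (by simpa using hne), Finset.card_singleton]
          _ ≤ _ := Finset.card_le_card hsub
      omega
    · -- intersection is empty
      have hempty : E (i, j) ∩ E (i', j') = ∅ := by
        rw [Finset.eq_empty_iff_forall_notMem]
        intro v hv
        rw [Finset.mem_inter, hmemE i j hi hj, hmemE i' j' hi' hj'] at hv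
        obtain ⟨h1, h2⟩ := hv
        rcases h1 with h1 | h1 | h1 <;> rcases h2 with h2 | h2 | h2 <;> omega
      rw [hempty] at hcard
      simp at hcard
  refine ⟨H, ?_, ?_, ?_, ?_⟩
  · -- all edges have card 3
    intro e he
    obtain ⟨i, j, hi, hj, rfl⟩ := (hmemH e).1 he
    have h1 : 2 * i < n := by omega
    have h2 : 2 * i + 1 < n := by omega
    have h3 : 2 * s + j < n := by omega
    have d12 : F (2 * i) ≠ F (2 * i + 1) := by
      intro h; have := congrArg Fin.val h; rw [hFval _ h1, hFval _ h2] at this; omega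
    have d13 : F (2 * i) ≠ F (2 * s + j) := by
      intro h; have := congrArg Fin.val h; rw [hFval _ h1, hFval _ h3] at this; omega
    have d23 : F (2 * i + 1) ≠ F (2 * s + j) := by
      intro h; have := congrArg Fin.val h; rw [hFval _ h2, hFval _ h3] at this; omega
    show ({F (2 * i), F (2 * i + 1), F (2 * s + j)} : Finset (Fin n)).card = 3
    rw [Finset.card_insert_of_notMem (by simp [d12, d13]),
      Finset.card_insert_of_notMem (by simpa using d23), Finset.card_singleton]
  · -- P33Free
    rintro ⟨e1, e2, e3, he1, he2, he3, _, h12, h23, h13⟩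
    obtain ⟨i1, j1, hi1, hj1, rfl⟩ := (hmemH e1).1 he1
    obtain ⟨i2, j2, hi2, hj2, rfl⟩ := (hmemH e2).1 he2
    obtain ⟨i3, j3, hi3, hj3, rfl⟩ := (hmemH e3).1 he3
    have hj12 : j1 = j2 := hinter _ _ _ _ hi1 hj1 hi2 hj2 h12
    have hj23 : j2 = j3 := hinter _ _ _ _ hi2 hj2 hi3 hj3 h23
    have hz : F (2 * s + j1) ∈ E (i1, j1) ∩ E (i3, j3) := by
      rw [Finset.mem_inter, hmemE _ _ hi1 hj1, hmemE _ _ hi3 hj3]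
      constructor
      · exact Or.inr (Or.inr (hFval _ (by omega)))
      · exact Or.inr (Or.inr (by rw [hFval _ (by omega)]; omega))
    rw [h13] at hz
    simp at hz
  · -- card = n^2/8
    have hinj : Set.InjOn E (↑(Finset.range s ×ˢ Finset.range t) : Set (ℕ × ℕ)) := by
      rintro ⟨i, j⟩ hp ⟨i', j'⟩ hp' heq
      simp only [Finset.mem_coe, Finset.mem_product, Finset.mem_range] at hp hp'
      obtain ⟨hi, hj⟩ := hp
      obtain ⟨hi', hj'⟩ := hp'
      have hx : F (2 * i) ∈ E (i', j') := by
        rw [← heq, hmemE _ _ hi hj]; exact Or.inl (hFval _ (by omega))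
      have hz : F (2 * s + j) ∈ E (i', j') := by
        rw [← heq, hmemE _ _ hi hj]; exact Or.inr (Or.inr (hFval _ (by omega)))
      rw [hmemE _ _ hi' hj', hFval _ (by omega)] at hx
      rw [hmemE _ _ hi' hj', hFval _ (by omega)] at hz
      have : i = i' ∧ j = j' := by
        constructor
        · rcases hx with h | h | h <;> omega
        · rcases hz with h | h | h <;> omega
      exact Prod.ext this.1 this.2
    have hcard : H.card = s * t := by
      rw [hH_def, Finset.card_image_of_injOn hinj, Finset.card_product,
        Finset.card_range, Finset.card_range]
    rw [hcard]
    obtain ⟨k, hk⟩ : ∃ k, n = 4 * k ∨ n = 4 * k + 1 ∨ n = 4 * k + 2 ∨ n = 4 * k + 3 :=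
      ⟨n / 4, by omega⟩
    rcases hk with h | h | h | h
    · have hs' : s = k := by omega
      have ht' : t = 2 * k := by omega
      have hsq : n ^ 2 = 16 * (k * k) := by rw [h]; ring
      have h1 : k * (2 * k) = 2 * (k * k) := by ring
      rw [hs', ht', hsq]
      generalize k * k = m at h1 ⊢
      omega
    · have hs' : s = k := by omega
      have ht' : t = 2 * k + 1 := by omega
      have hsq : n ^ 2 = 16 * (k * k) + 8 * k + 1 := by rw [h]; ring
      have h1 : k * (2 * k + 1) = 2 * (k * k) + k := by ring
      rw [hs', ht', hsq]
      generalize k * k = m at h1 ⊢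
      omega
    · have hs' : s = k + 1 := by omega
      have ht' : t = 2 * k := by omega
      have hsq : n ^ 2 = 16 * (k * k) + 16 * k + 4 := by rw [h]; ring
      have h1 : (k + 1) * (2 * k) = 2 * (k * k) + 2 * k := by ring
      rw [hs', ht', hsq]
      generalize k * k = m at h1 ⊢
      omega
    · have hs' : s = k + 1 := by omega
      have ht' : t = 2 * k + 1 := by omega
      have hsq : n ^ 2 = 16 * (k * k) + 24 * k + 9 := by rw [h]; ring
      have h1 : (k + 1) * (2 * k + 1) = 2 * (k * k) + 3 * k + 1 := by ring
      rw [hs', ht', hsq]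
      generalize k * k = m at h1 ⊢
      omega
  · -- degree bound
    intro v
    have hsle : s ≤ (n + 1) / 2 := by omega
    have htle : t ≤ (n + 1) / 2 := by omega
    have hfilt : H.filter (fun e => v ∈ e)
        = ((Finset.range s ×ˢ Finset.range t).filter (fun p => v ∈ E p)).image E := by
      rw [hH_def, Finset.filter_image]
    have hle1 : hypDeg H v
        ≤ ((Finset.range s ×ˢ Finset.range t).filter (fun p => v ∈ E p)).card := by
      rw [hypDeg, hfilt]; exact Finset.card_image_le
    rcases lt_or_ge (v : ℕ) (2 * s) with hv | hv
    · have hsub : (Finset.range s ×ˢ Finset.range t).filter (fun p => v ∈ E p)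
          ⊆ ({(v : ℕ) / 2} : Finset ℕ) ×ˢ Finset.range t := by
        rintro ⟨i, j⟩ hp
        rw [Finset.mem_filter, Finset.mem_product, Finset.mem_range, Finset.mem_range] at hp
        obtain ⟨⟨hi, hj⟩, hvmem⟩ := hp
        rw [hmemE _ _ hi hj] at hvmem
        rw [Finset.mem_product, Finset.mem_singleton, Finset.mem_range]
        rcases hvmem with h | h | h <;> [skip; skip; omega] <;> exact ⟨by omega, hj⟩
      calc hypDeg H v ≤ _ := hle1
        _ ≤ (({(v : ℕ) / 2} : Finset ℕ) ×ˢ Finset.range t).card := Finset.card_le_card hsub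
        _ = t := by rw [Finset.card_product, Finset.card_singleton, Finset.card_range, one_mul]
        _ ≤ (n + 1) / 2 := htle
    · have hsub : (Finset.range s ×ˢ Finset.range t).filter (fun p => v ∈ E p)
          ⊆ Finset.range s ×ˢ ({(v : ℕ) - 2 * s} : Finset ℕ) := by
        rintro ⟨i, j⟩ hp
        rw [Finset.mem_filter, Finset.mem_product, Finset.mem_range, Finset.mem_range] at hp
        obtain ⟨⟨hi, hj⟩, hvmem⟩ := hp
        rw [hmemE _ _ hi hj] at hvmem
        rw [Finset.mem_product, Finset.mem_singleton, Finset.mem_range]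
        rcases hvmem with h | h | h <;> [omega; omega; exact ⟨hi, by omega⟩]
      calc hypDeg H v ≤ _ := hle1
        _ ≤ (Finset.range s ×ˢ ({(v : ℕ) - 2 * s} : Finset ℕ)).card := Finset.card_le_card hsub
        _ = s := by rw [Finset.card_product, Finset.card_singleton, Finset.card_range, mul_one]
        _ ≤ (n + 1) / 2 := hsle
end

section
/- Let H be a P^4_2-free 4-uniform hypergraph with minimum degree at least 11 in which every connected component has more than 19 edges or satisfies the degree condition globally. Then for every edge e of H, if the signature of e contains two distinct 2-element sets, these two sets are disjoint. -/
set_option maxRecDepth 40000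
set_option synthInstance.maxHeartbeats 2000000
set_option maxHeartbeats 2000000

open Finset

section Stx10Aux

variable {V : Type*} [DecidableEq V]

/-- The trace (pattern) of an edge on a named vertex list. -/
def stxTr {n : ℕ} (v : Fin n → V) (k : Finset V) : Finset (Fin n) :=
  Finset.univ.filter (fun i => v i ∈ k)

lemma stx_inter_image_eq {n : ℕ} (v : Fin n → V) (k : Finset V) (hv : Function.Injective v)
    (A : Finset (Fin n)) : k ∩ A.image v = (stxTr v k ∩ A).image v := by
  ext z
  simp only [mem_inter, mem_image, stxTr, mem_filter, mem_univ, true_and]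
  constructor
  · rintro ⟨hz, i, hiA, rfl⟩; exact ⟨i, ⟨hz, hiA⟩, rfl⟩
  · rintro ⟨i, ⟨hik, hiA⟩, rfl⟩; exact ⟨hik, i, hiA, rfl⟩

lemma stx_inter_image_card {n : ℕ} (v : Fin n → V) (k : Finset V) (hv : Function.Injective v)
    (A : Finset (Fin n)) : (k ∩ A.image v).card = (stxTr v k ∩ A).card := by
  rw [stx_inter_image_eq v k hv A, card_image_of_injective _ hv]

lemma stx_card_tr_add {n : ℕ} (v : Fin n → V) (k : Finset V) (hv : Function.Injective v) :
    (stxTr v k).card + (k \ Finset.univ.image v).card = k.card := by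
  have h1 : (k ∩ Finset.univ.image v).card = (stxTr v k).card := by
    rw [stx_inter_image_card v k hv univ, inter_univ]
  rw [← h1, Finset.card_inter_add_card_sdiff]

lemma stx_tr_image {n : ℕ} (v : Fin n → V) (hv : Function.Injective v) (A : Finset (Fin n)) :
    stxTr v (A.image v) = A := by
  ext i
  simp only [stxTr, mem_filter, mem_univ, true_and, mem_image]
  constructor
  · rintro ⟨j, hj, hji⟩; rwa [← hv hji]
  · intro h; exact ⟨i, h, rfl⟩

lemma stx_sdiff_named_zero {n : ℕ} (v : Fin n → V) (A : Finset (Fin n)) :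
    ((A.image v) \ Finset.univ.image v).card = 0 := by
  rw [card_eq_zero, sdiff_eq_empty_iff_subset]
  exact image_subset_image (subset_univ A)

lemma stx_eq_image_of_r0 {n : ℕ} (v : Fin n → V) (k : Finset V)
    (h : (k \ Finset.univ.image v).card = 0) : k = (stxTr v k).image v := by
  rw [card_eq_zero, sdiff_eq_empty_iff_subset] at h
  ext z
  simp only [mem_image, stxTr, mem_filter, mem_univ, true_and]
  constructor
  · intro hz
    obtain ⟨i, -, rfl⟩ := mem_image.mp (h hz)
    exact ⟨i, hz, rfl⟩
  · rintro ⟨i, hik, rfl⟩; exact hik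

lemma stx_inter_union_sdiff (s t : Finset V) : s ∩ t ∪ s \ t = s := by
  ext z; by_cases h : z ∈ t <;> simp [h]

/-- Per-edge constraint, transported to pattern level. -/
lemma stx_cpat {n : ℕ} (v : Fin n → V) (hv : Function.Injective v)
    {H : Finset (Finset V)} (hfree : ∀ e ∈ H, ∀ f ∈ H, e ≠ f → (e ∩ f).card ≠ 1)
    {k m : Finset V} (hk : k ∈ H) (hm : m ∈ H) (A : Finset (Fin n)) (hmA : m = A.image v) :
    (stxTr v k ∩ A).card ≠ 1 ∨ (stxTr v k = A ∧ (k \ Finset.univ.image v).card = 0) := by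
  by_cases hkm : k = m
  · exact Or.inr ⟨by rw [hkm, hmA, stx_tr_image v hv], by
      rw [hkm, hmA]; exact stx_sdiff_named_zero v A⟩
  · have hc := hfree k hk m hm hkm
    rw [hmA, stx_inter_image_card v k hv] at hc
    exact Or.inl hc

lemma stx_count_contra {n : ℕ} (v : Fin n → V) (H : Finset (Finset V)) (p : V)
    (hdeg : 11 ≤ (H.filter (fun e => p ∈ e)).card)
    (L : Finset (Finset (Fin n))) (hL : L.card ≤ 10)
    (hall : ∀ k ∈ H, p ∈ k → ∃ A ∈ L, k = A.image v) : False := by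
  have hsub : H.filter (fun e => p ∈ e) ⊆ L.image (fun A => A.image v) := by
    intro k hk
    obtain ⟨hkH, hkp⟩ := mem_filter.mp hk
    obtain ⟨A, hA, hkA⟩ := hall k hkH hkp
    exact mem_image.mpr ⟨A, hA, hkA.symm⟩
  have h1 := card_le_card hsub
  have h2 := card_image_le (s := L) (f := fun A => A.image v)
  omega

/-- injectivity helpers -/
lemma stx_inj6 (a b c d x y : V)
    (h1 : a≠b) (h2 : a≠c) (h3 : a≠d) (h4 : a≠x) (h5 : a≠y)
    (h6 : b≠c) (h7 : b≠d) (h8 : b≠x) (h9 : b≠y)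
    (h10 : c≠d) (h11 : c≠x) (h12 : c≠y)
    (h13 : d≠x) (h14 : d≠y) (h15 : x≠y) :
    Function.Injective ![a,b,c,d,x,y] := by
  rw [← List.nodup_ofFn]
  simp_all [List.ofFn_succ]

lemma stx_inj7 (a b c d x y u : V)
    (h1 : a≠b) (h2 : a≠c) (h3 : a≠d) (h4 : a≠x) (h5 : a≠y) (h6 : a≠u)
    (h7 : b≠c) (h8 : b≠d) (h9 : b≠x) (h10 : b≠y) (h11 : b≠u)
    (h12 : c≠d) (h13 : c≠x) (h14 : c≠y) (h15 : c≠u)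
    (h16 : d≠x) (h17 : d≠y) (h18 : d≠u)
    (h19 : x≠y) (h20 : x≠u) (h21 : y≠u) :
    Function.Injective ![a,b,c,d,x,y,u] := by
  rw [← List.nodup_ofFn]
  simp_all [List.ofFn_succ]

lemma stx_inj8 (a b c d x y w u : V)
    (h1 : a≠b) (h2 : a≠c) (h3 : a≠d) (h4 : a≠x) (h5 : a≠y) (h6 : a≠w) (h7 : a≠u)
    (h8 : b≠c) (h9 : b≠d) (h10 : b≠x) (h11 : b≠y) (h12 : b≠w) (h13 : b≠u)
    (h14 : c≠d) (h15 : c≠x) (h16 : c≠y) (h17 : c≠w) (h18 : c≠u)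
    (h19 : d≠x) (h20 : d≠y) (h21 : d≠w) (h22 : d≠u)
    (h23 : x≠y) (h24 : x≠w) (h25 : x≠u)
    (h26 : y≠w) (h27 : y≠u) (h28 : w≠u) :
    Function.Injective ![a,b,c,d,x,y,w,u] := by
  rw [← List.nodup_ofFn]
  simp_all [List.ofFn_succ]

end Stx10Aux

/-! ### Decidable pattern lemmas.
Indexing conventions:
* case 1 (6 names):  a=0 b=1 c=2 d=3 x=4 y=5, with e={0,1,2,3}, f={0,1,4,5}, g={0,2,4,5}.
* case 1, u-level (7 names): additionally u=6, h = {3,0,4,6}.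
* case 1, t-level (8 names): additionally t=7, k = {7,6,4,5}.
* case 2 (7 names): a=0 b=1 c=2 d=3 x=4 y=5 w=6, e={0,1,2,3}, f={0,1,4,5}, g={0,2,4,6}.
* case 2, u-level (8 names): additionally u=7.
-/

def stxL1d : Finset (Finset (Fin 6)) :=
  {{0,1,2,3},{0,1,3,4},{0,1,3,5},{0,2,3,4},{0,2,3,5},{0,3,4,5},{1,2,3,4},{1,2,3,5},{1,3,4,5},{2,3,4,5}}

lemma stx_dec1d : ∀ T : Finset (Fin 6), ∀ r : Fin 4, (T.card + r.1 = 4 ∧ (3:Fin 6) ∈ T ∧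
    ((T ∩ {0,1,2,3}).card ≠ 1 ∨ (T = {0,1,2,3} ∧ (r.1 = 0))) ∧
    ((T ∩ {0,1,4,5}).card ≠ 1 ∨ (T = {0,1,4,5} ∧ (r.1 = 0))) ∧
    ((T ∩ {0,2,4,5}).card ≠ 1 ∨ (T = {0,2,4,5} ∧ (r.1 = 0)))) →
    ((r.1 = 0 ∧ T ∈ stxL1d) ∨ (r.1 = 1 ∧ (T = {0,3,4} ∨ T = {0,3,5}))) := by decide

def stxL1u : Finset (Finset (Fin 7)) :=
  {{0,1,2,6},{0,1,6,4},{0,1,6,5},{0,2,6,4},{0,2,6,5},{0,3,6,4},{0,3,6,5},{1,2,6,4}}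

lemma stx_dec1u : ∀ T : Finset (Fin 7), ∀ r : Fin 4, (T.card + r.1 = 4 ∧ (6:Fin 7) ∈ T ∧
    ((T ∩ {0,1,2,3}).card ≠ 1 ∨ (T = {0,1,2,3} ∧ (r.1 = 0))) ∧
    ((T ∩ {0,1,4,5}).card ≠ 1 ∨ (T = {0,1,4,5} ∧ (r.1 = 0))) ∧
    ((T ∩ {0,2,4,5}).card ≠ 1 ∨ (T = {0,2,4,5} ∧ (r.1 = 0))) ∧
    ((T ∩ {3,0,4,6}).card ≠ 1 ∨ (T = {3,0,4,6} ∧ (r.1 = 0)))) →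
    ((r.1 = 0 ∧ T ∈ stxL1u) ∨ (r.1 = 1 ∧ T = {6,4,5})) := by decide

def stxL1t : Finset (Finset (Fin 8)) :=
  {{0,1,7,4},{0,2,7,4},{0,3,7,4},{0,3,7,5},{1,2,7,5},{7,6,4,5}}

lemma stx_dec1t : ∀ T : Finset (Fin 8), ∀ r : Fin 4, (T.card + r.1 = 4 ∧ (7:Fin 8) ∈ T ∧
    ((T ∩ {0,1,2,3}).card ≠ 1 ∨ (T = {0,1,2,3} ∧ (r.1 = 0))) ∧
    ((T ∩ {0,1,4,5}).card ≠ 1 ∨ (T = {0,1,4,5} ∧ (r.1 = 0))) ∧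
    ((T ∩ {0,2,4,5}).card ≠ 1 ∨ (T = {0,2,4,5} ∧ (r.1 = 0))) ∧
    ((T ∩ {3,0,4,6}).card ≠ 1 ∨ (T = {3,0,4,6} ∧ (r.1 = 0))) ∧
    ((T ∩ {7,6,4,5}).card ≠ 1 ∨ (T = {7,6,4,5} ∧ (r.1 = 0)))) →
    (r.1 = 0 ∧ T ∈ stxL1t) := by decide

def stxL2d : Finset (Finset (Fin 7)) :=
  {{0,1,2,3},{0,1,3,4},{0,1,3,6},{0,2,3,4},{0,2,3,5},{0,3,4,5},{0,3,6,4},{0,3,6,5},{1,2,3,4},{1,3,6,4},{2,3,4,5}}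

lemma stx_dec2d : ∀ T : Finset (Fin 7), ∀ r : Fin 4, (T.card + r.1 = 4 ∧ (3:Fin 7) ∈ T ∧
    ((T ∩ {0,1,2,3}).card ≠ 1 ∨ (T = {0,1,2,3} ∧ (r.1 = 0))) ∧
    ((T ∩ {0,1,4,5}).card ≠ 1 ∨ (T = {0,1,4,5} ∧ (r.1 = 0))) ∧
    ((T ∩ {0,2,4,6}).card ≠ 1 ∨ (T = {0,2,4,6} ∧ (r.1 = 0)))) →
    ((r.1 = 0 ∧ T ∈ stxL2d) ∨ (r.1 = 1 ∧ (T = {0,3,4} ∨ T = {1,3,5} ∨ T = {2,3,6}))) := by decide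

def stxL2uA : Finset (Finset (Fin 8)) :=
  {{0,1,2,7},{0,1,7,4},{0,1,7,6},{0,2,7,4},{0,2,7,5},{0,3,7,4},{1,2,7,4},{1,3,7,5},{2,3,7,6},{7,6,4,5}}

lemma stx_dec2uA : ∀ T : Finset (Fin 8), ∀ r : Fin 4, (T.card + r.1 = 4 ∧ (7:Fin 8) ∈ T ∧
    ((T ∩ {0,1,2,3}).card ≠ 1 ∨ (T = {0,1,2,3} ∧ (r.1 = 0))) ∧
    ((T ∩ {0,1,4,5}).card ≠ 1 ∨ (T = {0,1,4,5} ∧ (r.1 = 0))) ∧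
    ((T ∩ {0,2,4,6}).card ≠ 1 ∨ (T = {0,2,4,6} ∧ (r.1 = 0))) ∧
    ((T ∩ {3,0,4,7}).card ≠ 1 ∨ (T = {3,0,4,7} ∧ (r.1 = 0)))) →
    (r.1 = 0 ∧ T ∈ stxL2uA) := by decide

def stxL2uB : Finset (Finset (Fin 8)) :=
  {{0,1,2,7},{0,1,7,4},{0,1,7,6},{0,2,7,5},{0,3,7,4},{1,2,7,4},{1,3,7,5},{2,3,7,6},{7,6,4,5}}

lemma stx_dec2uB : ∀ T : Finset (Fin 8), ∀ r : Fin 4, (T.card + r.1 = 4 ∧ (7:Fin 8) ∈ T ∧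
    ((T ∩ {0,1,2,3}).card ≠ 1 ∨ (T = {0,1,2,3} ∧ (r.1 = 0))) ∧
    ((T ∩ {0,1,4,5}).card ≠ 1 ∨ (T = {0,1,4,5} ∧ (r.1 = 0))) ∧
    ((T ∩ {0,2,4,6}).card ≠ 1 ∨ (T = {0,2,4,6} ∧ (r.1 = 0))) ∧
    ((T ∩ {3,1,5,7}).card ≠ 1 ∨ (T = {3,1,5,7} ∧ (r.1 = 0)))) →
    (r.1 = 0 ∧ T ∈ stxL2uB) := by decide

section Stx10Config

variable {V : Type*} [DecidableEq V]

/-- Case 2, u-level, h = {d,a,x,u}. -/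
lemma stxU2A (H : Finset (Finset V)) (huni : ∀ e ∈ H, e.card = 4)
    (hfree : ∀ e ∈ H, ∀ f ∈ H, e ≠ f → (e ∩ f).card ≠ 1)
    (hdeg : ∀ p : V, 11 ≤ (H.filter (fun e => p ∈ e)).card)
    (a b c d x y w u : V)
    (n1 : a≠b) (n2 : a≠c) (n3 : a≠d) (n4 : a≠x) (n5 : a≠y) (n6 : a≠w) (n7 : a≠u)
    (n8 : b≠c) (n9 : b≠d) (n10 : b≠x) (n11 : b≠y) (n12 : b≠w) (n13 : b≠u)
    (n14 : c≠d) (n15 : c≠x) (n16 : c≠y) (n17 : c≠w) (n18 : c≠u)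
    (n19 : d≠x) (n20 : d≠y) (n21 : d≠w) (n22 : d≠u)
    (n23 : x≠y) (n24 : x≠w) (n25 : x≠u)
    (n26 : y≠w) (n27 : y≠u) (n28 : w≠u)
    (he : {a,b,c,d} ∈ H) (hf : {a,b,x,y} ∈ H) (hg : {a,c,x,w} ∈ H)
    (hh : {d,a,x,u} ∈ H) : False := by
  have hv : Function.Injective ![a,b,c,d,x,y,w,u] :=
    stx_inj8 a b c d x y w u n1 n2 n3 n4 n5 n6 n7 n8 n9 n10 n11 n12 n13 n14 n15 n16 n17 n18
      n19 n20 n21 n22 n23 n24 n25 n26 n27 n28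
  set v : Fin 8 → V := ![a,b,c,d,x,y,w,u] with hvdef
  have hv0 : v 0 = a := rfl
  have hv1 : v 1 = b := rfl
  have hv2 : v 2 = c := rfl
  have hv3 : v 3 = d := rfl
  have hv4 : v 4 = x := rfl
  have hv5 : v 5 = y := rfl
  have hv6 : v 6 = w := rfl
  have hv7 : v 7 = u := rfl
  have hEe : ({a,b,c,d} : Finset V) = ({0,1,2,3} : Finset (Fin 8)).image v := by
    simp [Finset.image_insert, hv0, hv1, hv2, hv3]
  have hEf : ({a,b,x,y} : Finset V) = ({0,1,4,5} : Finset (Fin 8)).image v := by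
    simp [Finset.image_insert, hv0, hv1, hv4, hv5]
  have hEg : ({a,c,x,w} : Finset V) = ({0,2,4,6} : Finset (Fin 8)).image v := by
    simp [Finset.image_insert, hv0, hv2, hv4, hv6]
  have hEh : ({d,a,x,u} : Finset V) = ({3,0,4,7} : Finset (Fin 8)).image v := by
    simp [Finset.image_insert, hv3, hv0, hv4, hv7]
  refine stx_count_contra v H u (hdeg u) stxL2uA (by decide) ?_
  intro k hkH hku
  have hc4 : (stxTr v k).card + (k \ Finset.univ.image v).card = 4 := by
    rw [stx_card_tr_add v k hv]; exact huni k hkH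
  have hpiv : (7 : Fin 8) ∈ stxTr v k := by
    simp only [stxTr, mem_filter, mem_univ, true_and]
    rw [hv7]; exact hku
  have hrlt : (k \ Finset.univ.image v).card < 4 := by
    have : 0 < (stxTr v k).card := card_pos.mpr ⟨7, hpiv⟩
    omega
  have hres := stx_dec2uA (stxTr v k) ⟨(k \ Finset.univ.image v).card, hrlt⟩
    ⟨hc4, hpiv, stx_cpat v hv hfree hkH he _ hEe, stx_cpat v hv hfree hkH hf _ hEf,
     stx_cpat v hv hfree hkH hg _ hEg, stx_cpat v hv hfree hkH hh _ hEh⟩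
  exact ⟨stxTr v k, hres.2, stx_eq_image_of_r0 v k hres.1⟩

/-- Case 2, u-level, h = {d,b,y,u}. -/
lemma stxU2B (H : Finset (Finset V)) (huni : ∀ e ∈ H, e.card = 4)
    (hfree : ∀ e ∈ H, ∀ f ∈ H, e ≠ f → (e ∩ f).card ≠ 1)
    (hdeg : ∀ p : V, 11 ≤ (H.filter (fun e => p ∈ e)).card)
    (a b c d x y w u : V)
    (n1 : a≠b) (n2 : a≠c) (n3 : a≠d) (n4 : a≠x) (n5 : a≠y) (n6 : a≠w) (n7 : a≠u)
    (n8 : b≠c) (n9 : b≠d) (n10 : b≠x) (n11 : b≠y) (n12 : b≠w) (n13 : b≠u)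
    (n14 : c≠d) (n15 : c≠x) (n16 : c≠y) (n17 : c≠w) (n18 : c≠u)
    (n19 : d≠x) (n20 : d≠y) (n21 : d≠w) (n22 : d≠u)
    (n23 : x≠y) (n24 : x≠w) (n25 : x≠u)
    (n26 : y≠w) (n27 : y≠u) (n28 : w≠u)
    (he : {a,b,c,d} ∈ H) (hf : {a,b,x,y} ∈ H) (hg : {a,c,x,w} ∈ H)
    (hh : {d,b,y,u} ∈ H) : False := by
  have hv : Function.Injective ![a,b,c,d,x,y,w,u] :=
    stx_inj8 a b c d x y w u n1 n2 n3 n4 n5 n6 n7 n8 n9 n10 n11 n12 n13 n14 n15 n16 n17 n18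
      n19 n20 n21 n22 n23 n24 n25 n26 n27 n28
  set v : Fin 8 → V := ![a,b,c,d,x,y,w,u] with hvdef
  have hv0 : v 0 = a := rfl
  have hv1 : v 1 = b := rfl
  have hv2 : v 2 = c := rfl
  have hv3 : v 3 = d := rfl
  have hv4 : v 4 = x := rfl
  have hv5 : v 5 = y := rfl
  have hv6 : v 6 = w := rfl
  have hv7 : v 7 = u := rfl
  have hEe : ({a,b,c,d} : Finset V) = ({0,1,2,3} : Finset (Fin 8)).image v := by
    simp [Finset.image_insert, hv0, hv1, hv2, hv3]
  have hEf : ({a,b,x,y} : Finset V) = ({0,1,4,5} : Finset (Fin 8)).image v := by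
    simp [Finset.image_insert, hv0, hv1, hv4, hv5]
  have hEg : ({a,c,x,w} : Finset V) = ({0,2,4,6} : Finset (Fin 8)).image v := by
    simp [Finset.image_insert, hv0, hv2, hv4, hv6]
  have hEh : ({d,b,y,u} : Finset V) = ({3,1,5,7} : Finset (Fin 8)).image v := by
    simp [Finset.image_insert, hv3, hv1, hv5, hv7]
  refine stx_count_contra v H u (hdeg u) stxL2uB (by decide) ?_
  intro k hkH hku
  have hc4 : (stxTr v k).card + (k \ Finset.univ.image v).card = 4 := by
    rw [stx_card_tr_add v k hv]; exact huni k hkH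
  have hpiv : (7 : Fin 8) ∈ stxTr v k := by
    simp only [stxTr, mem_filter, mem_univ, true_and]
    rw [hv7]; exact hku
  have hrlt : (k \ Finset.univ.image v).card < 4 := by
    have : 0 < (stxTr v k).card := card_pos.mpr ⟨7, hpiv⟩
    omega
  have hres := stx_dec2uB (stxTr v k) ⟨(k \ Finset.univ.image v).card, hrlt⟩
    ⟨hc4, hpiv, stx_cpat v hv hfree hkH he _ hEe, stx_cpat v hv hfree hkH hf _ hEf,
     stx_cpat v hv hfree hkH hg _ hEg, stx_cpat v hv hfree hkH hh _ hEh⟩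
  exact ⟨stxTr v k, hres.2, stx_eq_image_of_r0 v k hres.1⟩

/-- Case 1, t-level: e,f,g={a,c,x,y}, h={d,a,x,u}, k={t,u,x,y}. -/
lemma stxT1 (H : Finset (Finset V)) (huni : ∀ e ∈ H, e.card = 4)
    (hfree : ∀ e ∈ H, ∀ f ∈ H, e ≠ f → (e ∩ f).card ≠ 1)
    (hdeg : ∀ p : V, 11 ≤ (H.filter (fun e => p ∈ e)).card)
    (a b c d x y u t : V)
    (n1 : a≠b) (n2 : a≠c) (n3 : a≠d) (n4 : a≠x) (n5 : a≠y) (n6 : a≠u) (n7 : a≠t)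
    (n8 : b≠c) (n9 : b≠d) (n10 : b≠x) (n11 : b≠y) (n12 : b≠u) (n13 : b≠t)
    (n14 : c≠d) (n15 : c≠x) (n16 : c≠y) (n17 : c≠u) (n18 : c≠t)
    (n19 : d≠x) (n20 : d≠y) (n21 : d≠u) (n22 : d≠t)
    (n23 : x≠y) (n24 : x≠u) (n25 : x≠t)
    (n26 : y≠u) (n27 : y≠t) (n28 : u≠t)
    (he : {a,b,c,d} ∈ H) (hf : {a,b,x,y} ∈ H) (hg : {a,c,x,y} ∈ H)
    (hh : {d,a,x,u} ∈ H) (hk : {t,u,x,y} ∈ H) : False := by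
  have hv : Function.Injective ![a,b,c,d,x,y,u,t] :=
    stx_inj8 a b c d x y u t n1 n2 n3 n4 n5 n6 n7 n8 n9 n10 n11 n12 n13 n14 n15 n16 n17 n18
      n19 n20 n21 n22 n23 n24 n25 n26 n27 n28
  set v : Fin 8 → V := ![a,b,c,d,x,y,u,t] with hvdef
  have hv0 : v 0 = a := rfl
  have hv1 : v 1 = b := rfl
  have hv2 : v 2 = c := rfl
  have hv3 : v 3 = d := rfl
  have hv4 : v 4 = x := rfl
  have hv5 : v 5 = y := rfl
  have hv6 : v 6 = u := rfl
  have hv7 : v 7 = t := rfl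
  have hEe : ({a,b,c,d} : Finset V) = ({0,1,2,3} : Finset (Fin 8)).image v := by
    simp [Finset.image_insert, hv0, hv1, hv2, hv3]
  have hEf : ({a,b,x,y} : Finset V) = ({0,1,4,5} : Finset (Fin 8)).image v := by
    simp [Finset.image_insert, hv0, hv1, hv4, hv5]
  have hEg : ({a,c,x,y} : Finset V) = ({0,2,4,5} : Finset (Fin 8)).image v := by
    simp [Finset.image_insert, hv0, hv2, hv4, hv5]
  have hEh : ({d,a,x,u} : Finset V) = ({3,0,4,6} : Finset (Fin 8)).image v := by
    simp [Finset.image_insert, hv3, hv0, hv4, hv6]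
  have hEk : ({t,u,x,y} : Finset V) = ({7,6,4,5} : Finset (Fin 8)).image v := by
    simp [Finset.image_insert, hv7, hv6, hv4, hv5]
  refine stx_count_contra v H t (hdeg t) stxL1t (by decide) ?_
  intro k hkH hkt
  have hc4 : (stxTr v k).card + (k \ Finset.univ.image v).card = 4 := by
    rw [stx_card_tr_add v k hv]; exact huni k hkH
  have hpiv : (7 : Fin 8) ∈ stxTr v k := by
    simp only [stxTr, mem_filter, mem_univ, true_and]
    rw [hv7]; exact hkt
  have hrlt : (k \ Finset.univ.image v).card < 4 := by
    have : 0 < (stxTr v k).card := card_pos.mpr ⟨7, hpiv⟩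
    omega
  have hres := stx_dec1t (stxTr v k) ⟨(k \ Finset.univ.image v).card, hrlt⟩
    ⟨hc4, hpiv, stx_cpat v hv hfree hkH he _ hEe, stx_cpat v hv hfree hkH hf _ hEf,
     stx_cpat v hv hfree hkH hg _ hEg, stx_cpat v hv hfree hkH hh _ hEh,
     stx_cpat v hv hfree hkH hk _ hEk⟩
  exact ⟨stxTr v k, hres.2, stx_eq_image_of_r0 v k hres.1⟩

/-- Case 1, u-level: e,f,g={a,c,x,y}, h={d,a,x,u}. -/
lemma stxU1 (H : Finset (Finset V)) (huni : ∀ e ∈ H, e.card = 4)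
    (hfree : ∀ e ∈ H, ∀ f ∈ H, e ≠ f → (e ∩ f).card ≠ 1)
    (hdeg : ∀ p : V, 11 ≤ (H.filter (fun e => p ∈ e)).card)
    (a b c d x y u : V)
    (n1 : a≠b) (n2 : a≠c) (n3 : a≠d) (n4 : a≠x) (n5 : a≠y) (n6 : a≠u)
    (n7 : b≠c) (n8 : b≠d) (n9 : b≠x) (n10 : b≠y) (n11 : b≠u)
    (n12 : c≠d) (n13 : c≠x) (n14 : c≠y) (n15 : c≠u)
    (n16 : d≠x) (n17 : d≠y) (n18 : d≠u)
    (n19 : x≠y) (n20 : x≠u) (n21 : y≠u)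
    (he : {a,b,c,d} ∈ H) (hf : {a,b,x,y} ∈ H) (hg : {a,c,x,y} ∈ H)
    (hh : {d,a,x,u} ∈ H) : False := by
  have hv : Function.Injective ![a,b,c,d,x,y,u] :=
    stx_inj7 a b c d x y u n1 n2 n3 n4 n5 n6 n7 n8 n9 n10 n11 n12 n13 n14 n15 n16 n17 n18
      n19 n20 n21
  set v : Fin 7 → V := ![a,b,c,d,x,y,u] with hvdef
  have hv0 : v 0 = a := rfl
  have hv1 : v 1 = b := rfl
  have hv2 : v 2 = c := rfl
  have hv3 : v 3 = d := rfl
  have hv4 : v 4 = x := rfl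
  have hv5 : v 5 = y := rfl
  have hv6 : v 6 = u := rfl
  have hEe : ({a,b,c,d} : Finset V) = ({0,1,2,3} : Finset (Fin 7)).image v := by
    simp [Finset.image_insert, hv0, hv1, hv2, hv3]
  have hEf : ({a,b,x,y} : Finset V) = ({0,1,4,5} : Finset (Fin 7)).image v := by
    simp [Finset.image_insert, hv0, hv1, hv4, hv5]
  have hEg : ({a,c,x,y} : Finset V) = ({0,2,4,5} : Finset (Fin 7)).image v := by
    simp [Finset.image_insert, hv0, hv2, hv4, hv5]
  have hEh : ({d,a,x,u} : Finset V) = ({3,0,4,6} : Finset (Fin 7)).image v := by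
    simp [Finset.image_insert, hv3, hv0, hv4, hv6]
  -- process an arbitrary edge through u
  have hproc : ∀ k ∈ H, u ∈ k →
      (((k \ Finset.univ.image v).card = 0 ∧ stxTr v k ∈ stxL1u) ∨
        ((k \ Finset.univ.image v).card = 1 ∧ stxTr v k = {6,4,5})) := by
    intro k hkH hku
    have hc4 : (stxTr v k).card + (k \ Finset.univ.image v).card = 4 := by
      rw [stx_card_tr_add v k hv]; exact huni k hkH
    have hpiv : (6 : Fin 7) ∈ stxTr v k := by
      simp only [stxTr, mem_filter, mem_univ, true_and]
      rw [hv6]; exact hku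
    have hrlt : (k \ Finset.univ.image v).card < 4 := by
      have : 0 < (stxTr v k).card := card_pos.mpr ⟨6, hpiv⟩
      omega
    exact stx_dec1u (stxTr v k) ⟨(k \ Finset.univ.image v).card, hrlt⟩
      ⟨hc4, hpiv, stx_cpat v hv hfree hkH he _ hEe, stx_cpat v hv hfree hkH hf _ hEf,
       stx_cpat v hv hfree hkH hg _ hEg, stx_cpat v hv hfree hkH hh _ hEh⟩
  by_cases hall : ∀ k ∈ H, u ∈ k → (k \ Finset.univ.image v).card = 0
  · refine stx_count_contra v H u (hdeg u) stxL1u (by decide) ?_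
    intro k hkH hku
    rcases hproc k hkH hku with ⟨-, hT⟩ | ⟨h1, -⟩
    · exact ⟨stxTr v k, hT, stx_eq_image_of_r0 v k (hall k hkH hku)⟩
    · exact absurd (hall k hkH hku) (by omega)
  · push_neg at hall
    obtain ⟨k, hkH, hku, hkr⟩ := hall
    rcases hproc k hkH hku with ⟨h0, -⟩ | ⟨h1, hT⟩
    · exact hkr h0
    obtain ⟨t, ht⟩ := Finset.card_eq_one.mp h1
    have htk : t ∈ k \ Finset.univ.image v := by rw [ht]; exact mem_singleton_self t
    have htS : t ∉ Finset.univ.image v := (mem_sdiff.mp htk).2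
    have hta : a ≠ t := fun hEq => htS (by rw [← hEq]; exact mem_image_of_mem v (mem_univ 0))
    have htb : b ≠ t := fun hEq => htS (by rw [← hEq]; exact mem_image_of_mem v (mem_univ 1))
    have htc : c ≠ t := fun hEq => htS (by rw [← hEq]; exact mem_image_of_mem v (mem_univ 2))
    have htd : d ≠ t := fun hEq => htS (by rw [← hEq]; exact mem_image_of_mem v (mem_univ 3))
    have htx : x ≠ t := fun hEq => htS (by rw [← hEq]; exact mem_image_of_mem v (mem_univ 4))
    have hty : y ≠ t := fun hEq => htS (by rw [← hEq]; exact mem_image_of_mem v (mem_univ 5))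
    have htu : u ≠ t := fun hEq => htS (by rw [← hEq]; exact mem_image_of_mem v (mem_univ 6))
    have hkdecomp : k = (stxTr v k).image v ∪ {t} := by
      conv_lhs => rw [← stx_inter_union_sdiff k (Finset.univ.image v)]
      rw [stx_inter_image_eq v k hv Finset.univ, inter_univ, ht]
    rw [hT] at hkdecomp
    have himg : ({6,4,5} : Finset (Fin 7)).image v = {u,x,y} := by
      simp [Finset.image_insert, hv6, hv4, hv5]
    rw [himg] at hkdecomp
    have hshape : ({u,x,y} : Finset V) ∪ {t} = {t,u,x,y} := by
      ext z; simp; tauto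
    rw [hshape] at hkdecomp
    rw [hkdecomp] at hkH
    exact stxT1 H huni hfree hdeg a b c d x y u t
      n1 n2 n3 n4 n5 n6 hta n7 n8 n9 n10 n11 htb n12 n13 n14 n15 htc n16 n17 n18 htd
      n19 n20 htx n21 hty htu he hf hg hh hkH

/-- Case 1: e={a,b,c,d}, f={a,b,x,y}, g={a,c,x,y} all in H leads to contradiction. -/
lemma stx_case1 (H : Finset (Finset V)) (huni : ∀ e ∈ H, e.card = 4)
    (hfree : ∀ e ∈ H, ∀ f ∈ H, e ≠ f → (e ∩ f).card ≠ 1)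
    (hdeg : ∀ p : V, 11 ≤ (H.filter (fun e => p ∈ e)).card)
    (a b c d x y : V)
    (n1 : a≠b) (n2 : a≠c) (n3 : a≠d) (n4 : a≠x) (n5 : a≠y)
    (n6 : b≠c) (n7 : b≠d) (n8 : b≠x) (n9 : b≠y)
    (n10 : c≠d) (n11 : c≠x) (n12 : c≠y)
    (n13 : d≠x) (n14 : d≠y) (n15 : x≠y)
    (he : {a,b,c,d} ∈ H) (hf : {a,b,x,y} ∈ H) (hg : {a,c,x,y} ∈ H) : False := by
  have hv : Function.Injective ![a,b,c,d,x,y] :=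
    stx_inj6 a b c d x y n1 n2 n3 n4 n5 n6 n7 n8 n9 n10 n11 n12 n13 n14 n15
  set v : Fin 6 → V := ![a,b,c,d,x,y] with hvdef
  have hv0 : v 0 = a := rfl
  have hv1 : v 1 = b := rfl
  have hv2 : v 2 = c := rfl
  have hv3 : v 3 = d := rfl
  have hv4 : v 4 = x := rfl
  have hv5 : v 5 = y := rfl
  have hEe : ({a,b,c,d} : Finset V) = ({0,1,2,3} : Finset (Fin 6)).image v := by
    simp [Finset.image_insert, hv0, hv1, hv2, hv3]
  have hEf : ({a,b,x,y} : Finset V) = ({0,1,4,5} : Finset (Fin 6)).image v := by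
    simp [Finset.image_insert, hv0, hv1, hv4, hv5]
  have hEg : ({a,c,x,y} : Finset V) = ({0,2,4,5} : Finset (Fin 6)).image v := by
    simp [Finset.image_insert, hv0, hv2, hv4, hv5]
  have hproc : ∀ k ∈ H, d ∈ k →
      (((k \ Finset.univ.image v).card = 0 ∧ stxTr v k ∈ stxL1d) ∨
        ((k \ Finset.univ.image v).card = 1 ∧
          (stxTr v k = {0,3,4} ∨ stxTr v k = {0,3,5}))) := by
    intro k hkH hkd
    have hc4 : (stxTr v k).card + (k \ Finset.univ.image v).card = 4 := by
      rw [stx_card_tr_add v k hv]; exact huni k hkH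
    have hpiv : (3 : Fin 6) ∈ stxTr v k := by
      simp only [stxTr, mem_filter, mem_univ, true_and]
      rw [hv3]; exact hkd
    have hrlt : (k \ Finset.univ.image v).card < 4 := by
      have : 0 < (stxTr v k).card := card_pos.mpr ⟨3, hpiv⟩
      omega
    exact stx_dec1d (stxTr v k) ⟨(k \ Finset.univ.image v).card, hrlt⟩
      ⟨hc4, hpiv, stx_cpat v hv hfree hkH he _ hEe, stx_cpat v hv hfree hkH hf _ hEf,
       stx_cpat v hv hfree hkH hg _ hEg⟩
  by_cases hall : ∀ k ∈ H, d ∈ k → (k \ Finset.univ.image v).card = 0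
  · refine stx_count_contra v H d (hdeg d) stxL1d (by decide) ?_
    intro k hkH hkd
    rcases hproc k hkH hkd with ⟨-, hT⟩ | ⟨h1, -⟩
    · exact ⟨stxTr v k, hT, stx_eq_image_of_r0 v k (hall k hkH hkd)⟩
    · exact absurd (hall k hkH hkd) (by omega)
  · push_neg at hall
    obtain ⟨k, hkH, hkd, hkr⟩ := hall
    rcases hproc k hkH hkd with ⟨h0, -⟩ | ⟨h1, hT⟩
    · exact hkr h0
    obtain ⟨u, hu⟩ := Finset.card_eq_one.mp h1
    have huk : u ∈ k \ Finset.univ.image v := by rw [hu]; exact mem_singleton_self u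
    have huS : u ∉ Finset.univ.image v := (mem_sdiff.mp huk).2
    have hua : a ≠ u := fun hEq => huS (by rw [← hEq]; exact mem_image_of_mem v (mem_univ 0))
    have hub : b ≠ u := fun hEq => huS (by rw [← hEq]; exact mem_image_of_mem v (mem_univ 1))
    have huc : c ≠ u := fun hEq => huS (by rw [← hEq]; exact mem_image_of_mem v (mem_univ 2))
    have hud : d ≠ u := fun hEq => huS (by rw [← hEq]; exact mem_image_of_mem v (mem_univ 3))
    have hux : x ≠ u := fun hEq => huS (by rw [← hEq]; exact mem_image_of_mem v (mem_univ 4))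
    have huy : y ≠ u := fun hEq => huS (by rw [← hEq]; exact mem_image_of_mem v (mem_univ 5))
    have hkdecomp : k = (stxTr v k).image v ∪ {u} := by
      conv_lhs => rw [← stx_inter_union_sdiff k (Finset.univ.image v)]
      rw [stx_inter_image_eq v k hv Finset.univ, inter_univ, hu]
    rcases hT with hT | hT
    · -- h = {d,a,x,u}
      rw [hT] at hkdecomp
      have himg : ({0,3,4} : Finset (Fin 6)).image v = {a,d,x} := by
        simp [Finset.image_insert, hv0, hv3, hv4]
      have hshape : ({a,d,x} : Finset V) ∪ {u} = {d,a,x,u} := by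
        ext z; simp; tauto
      rw [himg, hshape] at hkdecomp
      rw [hkdecomp] at hkH
      exact stxU1 H huni hfree hdeg a b c d x y u
        n1 n2 n3 n4 n5 hua n6 n7 n8 n9 hub n10 n11 n12 huc n13 n14 hud n15 hux huy
        he hf hg hkH
    · -- h = {d,a,y,u}: apply stxU1 with x and y swapped
      rw [hT] at hkdecomp
      have himg : ({0,3,5} : Finset (Fin 6)).image v = {a,d,y} := by
        simp [Finset.image_insert, hv0, hv3, hv5]
      have hshape : ({a,d,y} : Finset V) ∪ {u} = {d,a,y,u} := by
        ext z; simp; tauto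
      rw [himg, hshape] at hkdecomp
      rw [hkdecomp] at hkH
      have hf' : ({a,b,y,x} : Finset V) ∈ H := by
        rw [show ({a,b,y,x} : Finset V) = {a,b,x,y} by ext z; simp; tauto]; exact hf
      have hg' : ({a,c,y,x} : Finset V) ∈ H := by
        rw [show ({a,c,y,x} : Finset V) = {a,c,x,y} by ext z; simp; tauto]; exact hg
      exact stxU1 H huni hfree hdeg a b c d y x u
        n1 n2 n3 n5 n4 hua n6 n7 n9 n8 hub n10 n12 n11 huc n14 n13 hud n15.symm huy hux
        he hf' hg' hkH

/-- Case 2: e={a,b,c,d}, f={a,b,x,y}, g={a,c,x,w} all in H leads to contradiction. -/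
lemma stx_case2 (H : Finset (Finset V)) (huni : ∀ e ∈ H, e.card = 4)
    (hfree : ∀ e ∈ H, ∀ f ∈ H, e ≠ f → (e ∩ f).card ≠ 1)
    (hdeg : ∀ p : V, 11 ≤ (H.filter (fun e => p ∈ e)).card)
    (a b c d x y w : V)
    (n1 : a≠b) (n2 : a≠c) (n3 : a≠d) (n4 : a≠x) (n5 : a≠y) (n6 : a≠w)
    (n7 : b≠c) (n8 : b≠d) (n9 : b≠x) (n10 : b≠y) (n11 : b≠w)
    (n12 : c≠d) (n13 : c≠x) (n14 : c≠y) (n15 : c≠w)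
    (n16 : d≠x) (n17 : d≠y) (n18 : d≠w)
    (n19 : x≠y) (n20 : x≠w) (n21 : y≠w)
    (he : {a,b,c,d} ∈ H) (hf : {a,b,x,y} ∈ H) (hg : {a,c,x,w} ∈ H) : False := by
  have hv : Function.Injective ![a,b,c,d,x,y,w] :=
    stx_inj7 a b c d x y w n1 n2 n3 n4 n5 n6 n7 n8 n9 n10 n11 n12 n13 n14 n15 n16 n17 n18
      n19 n20 n21
  set v : Fin 7 → V := ![a,b,c,d,x,y,w] with hvdef
  have hv0 : v 0 = a := rfl
  have hv1 : v 1 = b := rfl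
  have hv2 : v 2 = c := rfl
  have hv3 : v 3 = d := rfl
  have hv4 : v 4 = x := rfl
  have hv5 : v 5 = y := rfl
  have hv6 : v 6 = w := rfl
  have hEe : ({a,b,c,d} : Finset V) = ({0,1,2,3} : Finset (Fin 7)).image v := by
    simp [Finset.image_insert, hv0, hv1, hv2, hv3]
  have hEf : ({a,b,x,y} : Finset V) = ({0,1,4,5} : Finset (Fin 7)).image v := by
    simp [Finset.image_insert, hv0, hv1, hv4, hv5]
  have hEg : ({a,c,x,w} : Finset V) = ({0,2,4,6} : Finset (Fin 7)).image v := by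
    simp [Finset.image_insert, hv0, hv2, hv4, hv6]
  have hproc : ∀ k ∈ H, d ∈ k →
      (((k \ Finset.univ.image v).card = 0 ∧ stxTr v k ∈ stxL2d) ∨
        ((k \ Finset.univ.image v).card = 1 ∧
          (stxTr v k = {0,3,4} ∨ stxTr v k = {1,3,5} ∨ stxTr v k = {2,3,6}))) := by
    intro k hkH hkd
    have hc4 : (stxTr v k).card + (k \ Finset.univ.image v).card = 4 := by
      rw [stx_card_tr_add v k hv]; exact huni k hkH
    have hpiv : (3 : Fin 7) ∈ stxTr v k := by
      simp only [stxTr, mem_filter, mem_univ, true_and]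
      rw [hv3]; exact hkd
    have hrlt : (k \ Finset.univ.image v).card < 4 := by
      have : 0 < (stxTr v k).card := card_pos.mpr ⟨3, hpiv⟩
      omega
    exact stx_dec2d (stxTr v k) ⟨(k \ Finset.univ.image v).card, hrlt⟩
      ⟨hc4, hpiv, stx_cpat v hv hfree hkH he _ hEe, stx_cpat v hv hfree hkH hf _ hEf,
       stx_cpat v hv hfree hkH hg _ hEg⟩
  by_cases hall : ∀ k ∈ H, d ∈ k → (k \ Finset.univ.image v).card = 0
  · -- all edges through d live on the 7 named vertices: exactly the 11 candidates,
    -- two of which meet in exactly {d}.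
    have hsub : H.filter (fun e => d ∈ e) ⊆ stxL2d.image (fun A => A.image v) := by
      intro k hk
      obtain ⟨hkH, hkd⟩ := mem_filter.mp hk
      rcases hproc k hkH hkd with ⟨-, hT⟩ | ⟨h1, -⟩
      · exact mem_image.mpr ⟨stxTr v k, hT, (stx_eq_image_of_r0 v k (hall k hkH hkd)).symm⟩
      · exact absurd (hall k hkH hkd) (by omega)
    have hinj2 : Function.Injective (fun A : Finset (Fin 7) => A.image v) :=
      Finset.image_injective hv
    have hcard : (stxL2d.image (fun A => A.image v)).card = 11 := by
      rw [Finset.card_image_of_injective _ hinj2]; decide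
    have heq : H.filter (fun e => d ∈ e) = stxL2d.image (fun A => A.image v) :=
      Finset.eq_of_subset_of_card_le hsub (by rw [hcard]; exact le_trans (by norm_num) (hdeg d))
    have hB1 : ({0,3,6,5} : Finset (Fin 7)).image v ∈ H := by
      have : ({0,3,6,5} : Finset (Fin 7)).image v ∈ stxL2d.image (fun A => A.image v) :=
        mem_image_of_mem _ (by decide)
      rw [← heq] at this
      exact (mem_filter.mp this).1
    have hB2 : ({1,2,3,4} : Finset (Fin 7)).image v ∈ H := by
      have : ({1,2,3,4} : Finset (Fin 7)).image v ∈ stxL2d.image (fun A => A.image v) :=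
        mem_image_of_mem _ (by decide)
      rw [← heq] at this
      exact (mem_filter.mp this).1
    have hne : ({0,3,6,5} : Finset (Fin 7)).image v ≠ ({1,2,3,4} : Finset (Fin 7)).image v :=
      fun hEq => absurd (Finset.image_injective hv hEq) (by decide)
    refine hfree _ hB1 _ hB2 hne ?_
    rw [← Finset.image_inter _ _ hv, Finset.card_image_of_injective _ hv]
    decide
  · push_neg at hall
    obtain ⟨k, hkH, hkd, hkr⟩ := hall
    rcases hproc k hkH hkd with ⟨h0, -⟩ | ⟨h1, hT⟩
    · exact hkr h0
    obtain ⟨u, hu⟩ := Finset.card_eq_one.mp h1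
    have huk : u ∈ k \ Finset.univ.image v := by rw [hu]; exact mem_singleton_self u
    have huS : u ∉ Finset.univ.image v := (mem_sdiff.mp huk).2
    have hua : a ≠ u := fun hEq => huS (by rw [← hEq]; exact mem_image_of_mem v (mem_univ 0))
    have hub : b ≠ u := fun hEq => huS (by rw [← hEq]; exact mem_image_of_mem v (mem_univ 1))
    have huc : c ≠ u := fun hEq => huS (by rw [← hEq]; exact mem_image_of_mem v (mem_univ 2))
    have hud : d ≠ u := fun hEq => huS (by rw [← hEq]; exact mem_image_of_mem v (mem_univ 3))
    have hux : x ≠ u := fun hEq => huS (by rw [← hEq]; exact mem_image_of_mem v (mem_univ 4))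
    have huy : y ≠ u := fun hEq => huS (by rw [← hEq]; exact mem_image_of_mem v (mem_univ 5))
    have huw : w ≠ u := fun hEq => huS (by rw [← hEq]; exact mem_image_of_mem v (mem_univ 6))
    have hkdecomp : k = (stxTr v k).image v ∪ {u} := by
      conv_lhs => rw [← stx_inter_union_sdiff k (Finset.univ.image v)]
      rw [stx_inter_image_eq v k hv Finset.univ, inter_univ, hu]
    rcases hT with hT | hT | hT
    · -- h = {d,a,x,u}
      rw [hT] at hkdecomp
      have himg : ({0,3,4} : Finset (Fin 7)).image v = {a,d,x} := by
        simp [Finset.image_insert, hv0, hv3, hv4]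
      have hshape : ({a,d,x} : Finset V) ∪ {u} = {d,a,x,u} := by
        ext z; simp; tauto
      rw [himg, hshape] at hkdecomp
      rw [hkdecomp] at hkH
      exact stxU2A H huni hfree hdeg a b c d x y w u
        n1 n2 n3 n4 n5 n6 hua n7 n8 n9 n10 n11 hub n12 n13 n14 n15 huc n16 n17 n18 hud
        n19 n20 hux n21 huy huw he hf hg hkH
    · -- h = {d,b,y,u}
      rw [hT] at hkdecomp
      have himg : ({1,3,5} : Finset (Fin 7)).image v = {b,d,y} := by
        simp [Finset.image_insert, hv1, hv3, hv5]
      have hshape : ({b,d,y} : Finset V) ∪ {u} = {d,b,y,u} := by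
        ext z; simp; tauto
      rw [himg, hshape] at hkdecomp
      rw [hkdecomp] at hkH
      exact stxU2B H huni hfree hdeg a b c d x y w u
        n1 n2 n3 n4 n5 n6 hua n7 n8 n9 n10 n11 hub n12 n13 n14 n15 huc n16 n17 n18 hud
        n19 n20 hux n21 huy huw he hf hg hkH
    · -- h = {d,c,w,u}: apply stxU2B with roles (b,y) ↔ (c,w), f ↔ g
      rw [hT] at hkdecomp
      have himg : ({2,3,6} : Finset (Fin 7)).image v = {c,d,w} := by
        simp [Finset.image_insert, hv2, hv3, hv6]
      have hshape : ({c,d,w} : Finset V) ∪ {u} = {d,c,w,u} := by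
        ext z; simp; tauto
      rw [himg, hshape] at hkdecomp
      rw [hkdecomp] at hkH
      have he' : ({a,c,b,d} : Finset V) ∈ H := by
        rw [show ({a,c,b,d} : Finset V) = {a,b,c,d} by ext z; simp; tauto]; exact he
      exact stxU2B H huni hfree hdeg a c b d x w y u
        n2 n1 n3 n4 n6 n5 hua n7.symm n12 n13 n15 n14 huc n8 n9 n11 n10 hub n16 n18 n17 hud
        n20 n19 hux n21.symm huw huy he' hg hf hkH

end Stx10Config

/-- In a `P^4_2`-free 4-uniform hypergraph with minimum degree at least 11
(assuming the known extremal bounds for `P^4_2`-free 4-graphs: at most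
`C(N-2, 2)` edges on `N ≥ 9` vertices and at most 17 edges on at most 8
vertices), any two distinct 2-element sets in the signature of an edge are
disjoint. -/
theorem stmt_10 {V : Type*} [Fintype V] [DecidableEq V]
    (H : Finset (Finset V))
    (huniform : ∀ e ∈ H, e.card = 4)
    (hfree : ∀ e ∈ H, ∀ f ∈ H, e ≠ f → (e ∩ f).card ≠ 1)
    (hdeg : ∀ v : V, 11 ≤ (H.filter (fun e => v ∈ e)).card)
    (hKMW : ∀ (U : Finset V) (H' : Finset (Finset V)),
      (∀ e ∈ H', e ⊆ U ∧ e.card = 4) →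
      (∀ e ∈ H', ∀ f ∈ H', e ≠ f → (e ∩ f).card ≠ 1) →
      (9 ≤ U.card → H'.card ≤ Nat.choose (U.card - 2) 2) ∧
      (U.card ≤ 8 → H'.card ≤ 17)) :
    ∀ e ∈ H, ∀ f ∈ H, ∀ g ∈ H, f ≠ e → g ≠ e →
      (e ∩ f).card = 2 → (e ∩ g).card = 2 → e ∩ f ≠ e ∩ g →
      Disjoint (e ∩ f) (e ∩ g) := by
  intro e he f hf g hg hfe hge hef2 heg2 hne
  by_contra hdis
  rw [Finset.not_disjoint_iff] at hdis
  obtain ⟨a, haf, hag⟩ := hdis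
  -- extract b with e ∩ f = {a, b}
  obtain ⟨b, hefab, hab⟩ : ∃ b, e ∩ f = {a, b} ∧ a ≠ b := by
    obtain ⟨p, q, hpq, hpe⟩ := Finset.card_eq_two.mp hef2
    have hx' : a = p ∨ a = q := by rw [hpe] at haf; simpa using haf
    rcases hx' with rfl | rfl
    · exact ⟨q, hpe, hpq⟩
    · exact ⟨p, by rw [hpe, pair_comm], Ne.symm hpq⟩
  obtain ⟨c, hegac, hac⟩ : ∃ c, e ∩ g = {a, c} ∧ a ≠ c := by
    obtain ⟨p, q, hpq, hpe⟩ := Finset.card_eq_two.mp heg2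
    have hx' : a = p ∨ a = q := by rw [hpe] at hag; simpa using hag
    rcases hx' with rfl | rfl
    · exact ⟨q, hpe, hpq⟩
    · exact ⟨p, by rw [hpe, pair_comm], Ne.symm hpq⟩
  have hbc : b ≠ c := by rintro rfl; exact hne (hefab.trans hegac.symm)
  have haE : a ∈ e := (mem_inter.mp haf).1
  have haF : a ∈ f := (mem_inter.mp haf).2
  have haG : a ∈ g := (mem_inter.mp hag).2
  have hbEF : b ∈ e ∩ f := by rw [hefab]; simp
  have hbE : b ∈ e := (mem_inter.mp hbEF).1
  have hcEG : c ∈ e ∩ g := by rw [hegac]; simp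
  have hcE : c ∈ e := (mem_inter.mp hcEG).1
  -- the fourth vertex d of e
  have hecard := huniform e he
  have habc_sub : ({a,b,c} : Finset V) ⊆ e := by
    intro z hz
    simp only [mem_insert, mem_singleton] at hz
    rcases hz with rfl | rfl | rfl <;> assumption
  have habc_card : ({a,b,c} : Finset V).card = 3 := by
    rw [card_insert_of_notMem (by simp [hab, hac]),
      card_insert_of_notMem (by simp [hbc]), card_singleton]
  have hsd : (e \ ({a,b,c} : Finset V)).card = 1 := by
    rw [card_sdiff_of_subset habc_sub, hecard, habc_card]
  obtain ⟨d, hd⟩ := Finset.card_eq_one.mp hsd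
  have hdmem : d ∈ e \ ({a,b,c} : Finset V) := by rw [hd]; exact mem_singleton_self d
  have hdE : d ∈ e := (mem_sdiff.mp hdmem).1
  have hdn := (mem_sdiff.mp hdmem).2
  simp only [mem_insert, mem_singleton] at hdn
  push_neg at hdn
  obtain ⟨hda, hdb, hdc⟩ := hdn
  have heeq : e = {a,b,c,d} := by
    have h1 : ({a,b,c} : Finset V) ∪ e \ {a,b,c} = e := Finset.union_sdiff_of_subset habc_sub
    rw [hd] at h1
    rw [← h1]; ext z; simp; try tauto
  -- f = {a,b,x,y}
  have hfE : f ∩ e = {a,b} := by rw [inter_comm]; exact hefab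
  have hfe2 : (f \ e).card = 2 := by
    have h1 := Finset.card_inter_add_card_sdiff f e
    rw [hfE] at h1
    have h2 : ({a,b} : Finset V).card = 2 := card_pair hab
    have h3 := huniform f hf
    omega
  have hgE : g ∩ e = {a,c} := by rw [inter_comm]; exact hegac
  have hge2 : (g \ e).card = 2 := by
    have h1 := Finset.card_inter_add_card_sdiff g e
    rw [hgE] at h1
    have h2 : ({a,c} : Finset V).card = 2 := card_pair hac
    have h3 := huniform g hg
    omega
  -- the common non-e vertex x of f and g
  have hfg_ne : f ≠ g := by rintro rfl; exact hne rfl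
  have hafg : a ∈ f ∩ g := mem_inter.mpr ⟨haF, haG⟩
  have hfg_lt : 1 < (f ∩ g).card := by
    have h0 : 0 < (f ∩ g).card := card_pos.mpr ⟨a, hafg⟩
    have h1 := hfree f hf g hg hfg_ne
    omega
  obtain ⟨x, hxfg, hxa⟩ := Finset.exists_mem_ne hfg_lt a
  have hxF : x ∈ f := (mem_inter.mp hxfg).1
  have hxG : x ∈ g := (mem_inter.mp hxfg).2
  have hxE : x ∉ e := by
    intro hxe
    have hx1 : x ∈ ({a,b} : Finset V) := by rw [← hfE]; exact mem_inter.mpr ⟨hxF, hxe⟩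
    simp only [mem_insert, mem_singleton] at hx1
    rcases hx1 with rfl | rfl
    · exact hxa rfl
    · have hx2 : x ∈ ({a,c} : Finset V) := by rw [← hgE]; exact mem_inter.mpr ⟨hxG, hxe⟩
      simp only [mem_insert, mem_singleton] at hx2
      rcases hx2 with h | h
      · exact hab h.symm
      · exact hbc h
  have hxfe : x ∈ f \ e := mem_sdiff.mpr ⟨hxF, hxE⟩
  have hxge : x ∈ g \ e := mem_sdiff.mpr ⟨hxG, hxE⟩
  obtain ⟨y, hfexy, hxy⟩ : ∃ y, f \ e = {x, y} ∧ x ≠ y := by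
    obtain ⟨p, q, hpq, hpe⟩ := Finset.card_eq_two.mp hfe2
    have hx' : x = p ∨ x = q := by rw [hpe] at hxfe; simpa using hxfe
    rcases hx' with rfl | rfl
    · exact ⟨q, hpe, hpq⟩
    · exact ⟨p, by rw [hpe, pair_comm], Ne.symm hpq⟩
  obtain ⟨w, hgexw, hxw⟩ : ∃ w, g \ e = {x, w} ∧ x ≠ w := by
    obtain ⟨p, q, hpq, hpe⟩ := Finset.card_eq_two.mp hge2
    have hx' : x = p ∨ x = q := by rw [hpe] at hxge; simpa using hxge
    rcases hx' with rfl | rfl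
    · exact ⟨q, hpe, hpq⟩
    · exact ⟨p, by rw [hpe, pair_comm], Ne.symm hpq⟩
  have hyfe : y ∈ f \ e := by rw [hfexy]; simp
  have hyE : y ∉ e := (mem_sdiff.mp hyfe).2
  have hwge : w ∈ g \ e := by rw [hgexw]; simp
  have hwE : w ∉ e := (mem_sdiff.mp hwge).2
  have hfeq : f = {a,b,x,y} := by
    have h1 : f ∩ e ∪ f \ e = f := stx_inter_union_sdiff f e
    rw [hfE, hfexy] at h1
    rw [← h1]; ext z; simp; try tauto
  have hgeq : g = {a,c,x,w} := by
    have h1 : g ∩ e ∪ g \ e = g := stx_inter_union_sdiff g e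
    rw [hgE, hgexw] at h1
    rw [← h1]; ext z; simp; try tauto
  -- distinctness
  have hax : a ≠ x := fun hEq => hxE (hEq ▸ haE)
  have hbx : b ≠ x := fun hEq => hxE (hEq ▸ hbE)
  have hcx : c ≠ x := fun hEq => hxE (hEq ▸ hcE)
  have hdx : d ≠ x := fun hEq => hxE (hEq ▸ hdE)
  have hay : a ≠ y := fun hEq => hyE (hEq ▸ haE)
  have hby : b ≠ y := fun hEq => hyE (hEq ▸ hbE)
  have hcy : c ≠ y := fun hEq => hyE (hEq ▸ hcE)
  have hdy : d ≠ y := fun hEq => hyE (hEq ▸ hdE)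
  have haw : a ≠ w := fun hEq => hwE (hEq ▸ haE)
  have hbw : b ≠ w := fun hEq => hwE (hEq ▸ hbE)
  have hcw : c ≠ w := fun hEq => hwE (hEq ▸ hcE)
  have hdw : d ≠ w := fun hEq => hwE (hEq ▸ hdE)
  have heH : ({a,b,c,d} : Finset V) ∈ H := heeq ▸ he
  have hfH : ({a,b,x,y} : Finset V) ∈ H := hfeq ▸ hf
  by_cases hyw : y = w
  · -- case 1
    rw [← hyw] at hgeq
    have hgH : ({a,c,x,y} : Finset V) ∈ H := hgeq ▸ hg
    exact stx_case1 H huniform hfree hdeg a b c d x y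
      hab hac hda.symm hax hay hbc hdb.symm hbx hby hdc.symm hcx hcy hdx hdy hxy
      heH hfH hgH
  · -- case 2
    have hgH : ({a,c,x,w} : Finset V) ∈ H := hgeq ▸ hg
    exact stx_case2 H huniform hfree hdeg a b c d x y w
      hab hac hda.symm hax hay haw hbc hdb.symm hbx hby hbw hdc.symm hcx hcy hcw
      hdx hdy hdw hxy hxw hyw
      heH hfH hgH
end

section
/- Let H be a 3-uniform hypergraph containing neither a loose path of length three nor a linear triangle, with minimum degree at least 7. Then for every edge e, if the signature of e contains two distinct 2-element sets, their intersection is a vertex v of e such that {v} also belongs to the signature of e. -/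
/-- `H` contains no linear triangle. -/
def TriangleFree3 {V : Type*} [DecidableEq V] (H : Finset (Finset V)) : Prop :=
  ¬ ∃ f₁ f₂ f₃ : Finset V, f₁ ∈ H ∧ f₂ ∈ H ∧ f₃ ∈ H ∧
    (f₁ ∪ f₂ ∪ f₃).card = 6 ∧ (f₁ ∩ f₂).card = 1 ∧ (f₁ ∩ f₃).card = 1 ∧
    (f₂ ∩ f₃).card = 1 ∧ f₁ ∩ f₂ ∩ f₃ = ∅

section Helpers

variable {V : Type*} [DecidableEq V]


lemma ex3 {h : Finset V} {p q : V} (hp : p ∈ h) (hq : q ∈ h) (hpq : p ≠ q)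
    (h3 : h.card = 3) : ∃ r, r ≠ p ∧ r ≠ q ∧ h = {p, q, r} := by
  have hsub : ({p, q} : Finset V) ⊆ h := by
    intro z hz; simp only [Finset.mem_insert, Finset.mem_singleton] at hz
    rcases hz with rfl | rfl <;> assumption
  have hc2 : ({p, q} : Finset V).card = 2 := by
    rw [Finset.card_insert_of_notMem (by simpa using hpq), Finset.card_singleton]
  have hcd : (h \ {p, q}).card = 1 := by
    rw [Finset.card_sdiff_of_subset hsub, hc2, h3]
  obtain ⟨r, hr⟩ := Finset.card_eq_one.mp hcd
  have hrm : r ∈ h \ ({p, q} : Finset V) := by rw [hr]; simp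
  simp only [Finset.mem_sdiff, Finset.mem_insert, Finset.mem_singleton] at hrm
  refine ⟨r, fun h' => hrm.2 (Or.inl h'), fun h' => hrm.2 (Or.inr h'), ?_⟩
  have := Finset.union_sdiff_of_subset hsub
  rw [hr] at this
  rw [← this]
  ext z; simp [or_assoc]

lemma ex2 {h : Finset V} {p : V} (hp : p ∈ h) (h2 : h.card = 2) :
    ∃ r, r ≠ p ∧ h = {p, r} := by
  obtain ⟨a, b, hab, rfl⟩ := Finset.card_eq_two.mp h2
  simp only [Finset.mem_insert, Finset.mem_singleton] at hp
  rcases hp with rfl | rfl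
  · exact ⟨b, fun h' => hab h'.symm, rfl⟩
  · exact ⟨a, fun h' => hab h', by rw [Finset.pair_comm]⟩

lemma ex3one {h : Finset V} {p : V} (hp : p ∈ h) (h3 : h.card = 3) :
    ∃ s t, s ≠ t ∧ s ≠ p ∧ t ≠ p ∧ h = {p, s, t} := by
  have : (h.erase p).card = 2 := by rw [Finset.card_erase_of_mem hp, h3]
  obtain ⟨s, t, hst, hEq⟩ := Finset.card_eq_two.mp this
  have hs : s ∈ h.erase p := by rw [hEq]; simp
  have ht : t ∈ h.erase p := by rw [hEq]; simp
  refine ⟨s, t, hst, Finset.ne_of_mem_erase hs, Finset.ne_of_mem_erase ht, ?_⟩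
  rw [← Finset.insert_erase hp, hEq]



lemma tri_contra {H : Finset (Finset V)} (htri : TriangleFree3 H)
    {p q r d1 d2 d3 : V}
    (h1 : ({p, q, d1} : Finset V) ∈ H)
    (h2 : ({p, r, d2} : Finset V) ∈ H)
    (h3 : ({q, r, d3} : Finset V) ∈ H)
    (npq : p ≠ q) (npr : p ≠ r) (npd1 : p ≠ d1) (npd2 : p ≠ d2) (npd3 : p ≠ d3)
    (nqr : q ≠ r) (nqd1 : q ≠ d1) (nqd2 : q ≠ d2) (nqd3 : q ≠ d3)
    (nrd1 : r ≠ d1) (nrd2 : r ≠ d2) (nrd3 : r ≠ d3)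
    (nd12 : d1 ≠ d2) (nd13 : d1 ≠ d3) (nd23 : d2 ≠ d3) : False := by
  apply htri
  refine ⟨{p, q, d1}, {p, r, d2}, {q, r, d3}, h1, h2, h3, ?_, ?_, ?_, ?_, ?_⟩
  · have hU : ({p, q, d1} : Finset V) ∪ {p, r, d2} ∪ {q, r, d3}
        = {p, q, r, d1, d2, d3} := by
      ext z
      simp only [Finset.mem_union, Finset.mem_insert, Finset.mem_singleton]
      tauto
    rw [hU]
    rw [Finset.card_insert_of_notMem (by simp_all),
      Finset.card_insert_of_notMem (by simp_all),
      Finset.card_insert_of_notMem (by simp_all),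
      Finset.card_insert_of_notMem (by simp_all),
      Finset.card_insert_of_notMem (by simp_all),
      Finset.card_singleton]
  · have : ({p, q, d1} : Finset V) ∩ {p, r, d2} = {p} := by
      ext z
      simp only [Finset.mem_inter, Finset.mem_insert, Finset.mem_singleton]
      constructor
      · rintro ⟨ha, hb⟩
        rcases ha with rfl | rfl | rfl <;> rcases hb with h | h | h <;>
          (try subst h) <;> simp_all
      · rintro rfl; tauto
    rw [this, Finset.card_singleton]
  · have : ({p, q, d1} : Finset V) ∩ {q, r, d3} = {q} := by
      ext z
      simp only [Finset.mem_inter, Finset.mem_insert, Finset.mem_singleton]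
      constructor
      · rintro ⟨ha, hb⟩
        rcases ha with rfl | rfl | rfl <;> rcases hb with h | h | h <;>
          (try subst h) <;> simp_all
      · rintro rfl; tauto
    rw [this, Finset.card_singleton]
  · have : ({p, r, d2} : Finset V) ∩ {q, r, d3} = {r} := by
      ext z
      simp only [Finset.mem_inter, Finset.mem_insert, Finset.mem_singleton]
      constructor
      · rintro ⟨ha, hb⟩
        rcases ha with rfl | rfl | rfl <;> rcases hb with h | h | h <;>
          (try subst h) <;> simp_all
      · rintro rfl; tauto
    rw [this, Finset.card_singleton]
  · ext z
    simp only [Finset.mem_inter, Finset.mem_insert, Finset.mem_singleton,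
      Finset.notMem_empty, iff_false, not_and]
    rintro ⟨ha, hb⟩ hc
    rcases ha with rfl | rfl | rfl <;> rcases hb with h | h | h <;>
      (try subst h) <;> simp_all

lemma path_contra {H : Finset (Finset V)} (hpath : P33Free H)
    {p q w u1 u2 z1 z2 : V}
    (h1 : ({p, u1, u2} : Finset V) ∈ H)
    (h2 : ({p, q, w} : Finset V) ∈ H)
    (h3 : ({q, z1, z2} : Finset V) ∈ H)
    (npq : p ≠ q) (npw : p ≠ w) (npu1 : p ≠ u1) (npu2 : p ≠ u2)
    (npz1 : p ≠ z1) (npz2 : p ≠ z2)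
    (nqw : q ≠ w) (nqu1 : q ≠ u1) (nqu2 : q ≠ u2) (nqz1 : q ≠ z1) (nqz2 : q ≠ z2)
    (nwu1 : w ≠ u1) (nwu2 : w ≠ u2) (nwz1 : w ≠ z1) (nwz2 : w ≠ z2)
    (nu12 : u1 ≠ u2) (nu1z1 : u1 ≠ z1) (nu1z2 : u1 ≠ z2)
    (nu2z1 : u2 ≠ z1) (nu2z2 : u2 ≠ z2) (nz12 : z1 ≠ z2) : False := by
  apply hpath
  refine ⟨{p, u1, u2}, {p, q, w}, {q, z1, z2}, h1, h2, h3, ?_, ?_, ?_, ?_⟩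
  · have hU : ({p, u1, u2} : Finset V) ∪ {p, q, w} ∪ {q, z1, z2}
        = {p, q, w, u1, u2, z1, z2} := by
      ext z
      simp only [Finset.mem_union, Finset.mem_insert, Finset.mem_singleton]
      tauto
    rw [hU]
    rw [Finset.card_insert_of_notMem (by simp_all),
      Finset.card_insert_of_notMem (by simp_all),
      Finset.card_insert_of_notMem (by simp_all),
      Finset.card_insert_of_notMem (by simp_all),
      Finset.card_insert_of_notMem (by simp_all),
      Finset.card_insert_of_notMem (by simp_all),
      Finset.card_singleton]
  · have : ({p, u1, u2} : Finset V) ∩ {p, q, w} = {p} := by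
      ext z
      simp only [Finset.mem_inter, Finset.mem_insert, Finset.mem_singleton]
      constructor
      · rintro ⟨ha, hb⟩
        rcases ha with rfl | rfl | rfl <;> rcases hb with h | h | h <;>
          (try subst h) <;> simp_all
      · rintro rfl; tauto
    rw [this, Finset.card_singleton]
  · have : ({p, q, w} : Finset V) ∩ {q, z1, z2} = {q} := by
      ext z
      simp only [Finset.mem_inter, Finset.mem_insert, Finset.mem_singleton]
      constructor
      · rintro ⟨ha, hb⟩
        rcases ha with rfl | rfl | rfl <;> rcases hb with h | h | h <;>
          (try subst h) <;> simp_all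
      · rintro rfl; tauto
    rw [this, Finset.card_singleton]
  · ext z
    simp only [Finset.mem_inter, Finset.mem_insert, Finset.mem_singleton,
      Finset.notMem_empty, iff_false, not_and]
    intro ha hb
    rcases ha with rfl | rfl | rfl <;> rcases hb with h | h | h <;>
      (try subst h) <;> simp_all

lemma card_insert_le' {α : Type*} [DecidableEq α] {s : Finset α} {a : α} {n : ℕ}
    (h : s.card ≤ n) : (insert a s).card ≤ n + 1 :=
  le_trans (Finset.card_insert_le _ _) (Nat.add_le_add_right h 1)

lemma aux {V : Type*} [Fintype V] [DecidableEq V] {H : Finset (Finset V)}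
    (huniform : ∀ e ∈ H, e.card = 3) (hpath : P33Free H) (htri : TriangleFree3 H)
    (hdeg : ∀ v : V, 7 ≤ (H.filter (fun e => v ∈ e)).card)
    {v a b x y : V}
    (nva : v ≠ a) (nvb : v ≠ b) (nab : a ≠ b)
    (nxv : x ≠ v) (nxa : x ≠ a) (nxb : x ≠ b)
    (nyv : y ≠ v) (nya : y ≠ a) (nyb : y ≠ b) (nxy : x ≠ y)
    (hP : ({v, a, x} : Finset V) ∈ H) (hQ : ({v, b, y} : Finset V) ∈ H)
    (hstar : ∀ h ∈ H, v ∈ h → h ≠ ({v, a, b} : Finset V) → a ∈ h ∨ b ∈ h) :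
    ∃ w1 w2 : V, w1 ≠ w2 ∧
      (w1 ≠ v ∧ w1 ≠ a ∧ w1 ≠ b ∧ w1 ≠ x ∧ w1 ≠ y) ∧
      (w2 ≠ v ∧ w2 ≠ a ∧ w2 ≠ b ∧ w2 ≠ x ∧ w2 ≠ y) ∧
      ({a, x, w1} : Finset V) ∈ H ∧ ({a, x, w2} : Finset V) ∈ H := by
  set W : Finset V := Finset.univ.filter
    (fun w => (w ≠ v ∧ w ≠ a ∧ w ≠ b ∧ w ≠ x ∧ w ≠ y) ∧ ({a, x, w} : Finset V) ∈ H)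
    with hWdef
  set E5 : Finset (Finset V) :=
    {({a, x, v} : Finset V), {a, x, b}, {a, x, y}, {x, b, v}, {x, y, b}} with hE5def
  have hPxva : ({x, v, a} : Finset V) ∈ H := by
    have : ({v, a, x} : Finset V) = {x, v, a} := by
      rw [Finset.pair_comm a x, Finset.insert_comm v x]
    rwa [this] at hP
  have hcover : H.filter (fun h => x ∈ h) ⊆
      W.image (fun w => ({a, x, w} : Finset V)) ∪ E5 := by
    intro h hh
    rw [Finset.mem_filter] at hh
    obtain ⟨hH, hxh⟩ := hh
    have hc3 := huniform h hH
    rw [Finset.mem_union]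
    by_cases hah : a ∈ h
    · obtain ⟨w, hw1, hw2, hEq⟩ := ex3 hah hxh nxa.symm hc3
      by_cases hwv : w = v
      · right; rw [hEq, hwv]; simp [hE5def]
      by_cases hwb : w = b
      · right; rw [hEq, hwb]; simp [hE5def]
      by_cases hwy : w = y
      · right; rw [hEq, hwy]; simp [hE5def]
      · left
        rw [Finset.mem_image]
        refine ⟨w, ?_, hEq.symm⟩
        rw [hWdef, Finset.mem_filter]
        exact ⟨Finset.mem_univ _, ⟨hwv, hw1, hwb, hw2, hwy⟩, hEq ▸ hH⟩
    · by_cases hvh : v ∈ h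
      · have hne : h ≠ ({v, a, b} : Finset V) := by
          rintro rfl; exact hah (by simp)
        have hbh : b ∈ h := (hstar h hH hvh hne).resolve_left hah
        obtain ⟨t, ht1, ht2, hEq⟩ := ex3 hxh hbh nxb hc3
        have hvt : v = t := by
          rw [hEq] at hvh
          simp only [Finset.mem_insert, Finset.mem_singleton] at hvh
          rcases hvh with h' | h' | h'
          · exact absurd h'.symm nxv
          · exact absurd h' nvb
          · exact h'
        right; rw [hEq, ← hvt]; simp [hE5def]
      · by_cases hyh : y ∈ h
        · obtain ⟨t, ht1, ht2, hEq⟩ := ex3 hxh hyh nxy hc3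
          by_cases htb : t = b
          · right; rw [hEq, htb]; simp [hE5def]
          · exfalso
            have htv : t ≠ v := fun h' => hvh (h' ▸ (by rw [hEq]; simp))
            have hta : t ≠ a := fun h' => hah (h' ▸ (by rw [hEq]; simp))
            have hPvxa : ({v, x, a} : Finset V) ∈ H := by
              have : ({v, a, x} : Finset V) = {v, x, a} := by
                rw [Finset.pair_comm a x]
              rwa [this] at hP
            have hQvyb : ({v, y, b} : Finset V) ∈ H := by
              have : ({v, b, y} : Finset V) = {v, y, b} := by
                rw [Finset.pair_comm b y]
              rwa [this] at hQ
            exact tri_contra htri hPvxa hQvyb (hEq ▸ hH)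
              nxv.symm nyv.symm nva nvb (fun h' => htv h'.symm)
              nxy nxa nxb (fun h' => ht1 h'.symm)
              nya nyb (fun h' => ht2 h'.symm)
              nab (fun h' => hta h'.symm) (fun h' => htb h'.symm)
        · by_cases hbh : b ∈ h
          · obtain ⟨t, ht1, ht2, hEq⟩ := ex3 hxh hbh nxb hc3
            exfalso
            have htv : t ≠ v := fun h' => hvh (h' ▸ (by rw [hEq]; simp))
            have hta : t ≠ a := fun h' => hah (h' ▸ (by rw [hEq]; simp))
            have hty : t ≠ y := fun h' => hyh (h' ▸ (by rw [hEq]; simp))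
            have hPvxa : ({v, x, a} : Finset V) ∈ H := by
              have : ({v, a, x} : Finset V) = {v, x, a} := by
                rw [Finset.pair_comm a x]
              rwa [this] at hP
            exact tri_contra htri hPvxa hQ (hEq ▸ hH)
              nxv.symm nvb nva nyv.symm (fun h' => htv h'.symm)
              nxb nxa nxy (fun h' => ht1 h'.symm)
              nab.symm (fun h' => nyb h'.symm) (fun h' => ht2 h'.symm)
              nya.symm (fun h' => hta h'.symm) (fun h' => hty h'.symm)
          · exfalso
            obtain ⟨s, t, hst, hsx, htx, hEq⟩ := ex3one hxh hc3
            have hsv : s ≠ v := fun h' => hvh (h' ▸ (by rw [hEq]; simp))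
            have hsa : s ≠ a := fun h' => hah (h' ▸ (by rw [hEq]; simp))
            have hsb : s ≠ b := fun h' => hbh (h' ▸ (by rw [hEq]; simp))
            have hsy : s ≠ y := fun h' => hyh (h' ▸ (by rw [hEq]; simp))
            have htv : t ≠ v := fun h' => hvh (h' ▸ (by rw [hEq]; simp))
            have hta : t ≠ a := fun h' => hah (h' ▸ (by rw [hEq]; simp))
            have htb : t ≠ b := fun h' => hbh (h' ▸ (by rw [hEq]; simp))
            have hty : t ≠ y := fun h' => hyh (h' ▸ (by rw [hEq]; simp))
            exact path_contra hpath (hEq ▸ hH) hPxva hQ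
              nxv nxa hsx.symm htx.symm nxb nxy
              nva hsv.symm htv.symm nvb nyv.symm
              hsa.symm hta.symm nab nya.symm
              hst hsb hsy htb hty nyb.symm
  have h7 : 7 ≤ (H.filter (fun h => x ∈ h)).card := hdeg x
  have hc1 : (H.filter (fun h => x ∈ h)).card ≤
      (W.image (fun w => ({a, x, w} : Finset V)) ∪ E5).card :=
    Finset.card_le_card hcover
  have hc2 := Finset.card_union_le (W.image (fun w => ({a, x, w} : Finset V))) E5
  have hc3 : (W.image (fun w => ({a, x, w} : Finset V))).card ≤ W.card :=
    Finset.card_image_le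
  have hc5 : E5.card ≤ 5 := by
    rw [hE5def]
    refine card_insert_le' (card_insert_le' (card_insert_le' (card_insert_le' ?_)))
    exact le_of_eq (Finset.card_singleton _)
  have hW2 : 1 < W.card := by omega
  obtain ⟨w1, hw1, w2, hw2, hne⟩ := Finset.one_lt_card.mp hW2
  rw [hWdef, Finset.mem_filter] at hw1 hw2
  exact ⟨w1, w2, hne, hw1.2.1, hw2.2.1, hw1.2.2, hw2.2.2⟩

end Helpers

/-- In a 3-uniform hypergraph with no loose path of length three and no linear
triangle, of minimum degree at least 7: if the signature of an edge `e`
contains two distinct 2-element sets, then their intersection is a single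
vertex `v` of `e` such that `{v}` also belongs to the signature of `e`. -/
theorem stmt_15 {V : Type*} [Fintype V] [DecidableEq V]
    (H : Finset (Finset V))
    (huniform : ∀ e ∈ H, e.card = 3)
    (hpath : P33Free H)
    (htri : TriangleFree3 H)
    (hdeg : ∀ v : V, 7 ≤ (H.filter (fun e => v ∈ e)).card) :
    ∀ e ∈ H, ∀ f ∈ H, ∀ g ∈ H, f ≠ e → g ≠ e →
      (e ∩ f).card = 2 → (e ∩ g).card = 2 → e ∩ f ≠ e ∩ g →
      ∃ v : V, v ∈ e ∧ (e ∩ f) ∩ (e ∩ g) = {v} ∧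
        ∃ h ∈ H, h ≠ e ∧ e ∩ h = {v} := by
  intro e he f hf g hg hfe hge hef2 heg2 hnefg
  have he3 := huniform e he
  have hf3 := huniform f hf
  have hg3 := huniform g hg
  -- Step A: the two 2-sets intersect in exactly one vertex v
  have hXY1 : ((e ∩ f) ∩ (e ∩ g)).card = 1 := by
    have hsub : (e ∩ f) ∪ (e ∩ g) ⊆ e :=
      Finset.union_subset Finset.inter_subset_left Finset.inter_subset_left
    have h1 : ((e ∩ f) ∪ (e ∩ g)).card ≤ 3 :=
      le_trans (Finset.card_le_card hsub) (le_of_eq he3)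
    have h2 := Finset.card_union_add_card_inter (e ∩ f) (e ∩ g)
    have hle : ((e ∩ f) ∩ (e ∩ g)).card ≤ 1 := by
      by_contra hgt
      push_neg at hgt
      have hs1 : (e ∩ f) ∩ (e ∩ g) ⊆ e ∩ f := Finset.inter_subset_left
      have hs2 : (e ∩ f) ∩ (e ∩ g) ⊆ e ∩ g := Finset.inter_subset_right
      have he1 : (e ∩ f) ∩ (e ∩ g) = e ∩ f :=
        Finset.eq_of_subset_of_card_le hs1 (by omega)
      have he2 : (e ∩ f) ∩ (e ∩ g) = e ∩ g :=
        Finset.eq_of_subset_of_card_le hs2 (by omega)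
      exact hnefg (he1 ▸ he2)
    omega
  obtain ⟨v, hvEq⟩ := Finset.card_eq_one.mp hXY1
  have hvmem : v ∈ (e ∩ f) ∩ (e ∩ g) := by rw [hvEq]; simp
  have hvef : v ∈ e ∩ f := (Finset.mem_inter.mp hvmem).1
  have hveg : v ∈ e ∩ g := (Finset.mem_inter.mp hvmem).2
  have hve : v ∈ e := (Finset.mem_inter.mp hvef).1
  have hvf : v ∈ f := (Finset.mem_inter.mp hvef).2
  have hvg : v ∈ g := (Finset.mem_inter.mp hveg).2
  obtain ⟨a, hav, hefEq⟩ := ex2 hvef hef2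
  obtain ⟨b, hbv, hegEq⟩ := ex2 hveg heg2
  have nva : v ≠ a := hav.symm
  have nvb : v ≠ b := hbv.symm
  have nab : a ≠ b := fun h' => hnefg (by rw [hefEq, hegEq, h'])
  have haef : a ∈ e ∩ f := by rw [hefEq]; simp
  have hbeg : b ∈ e ∩ g := by rw [hegEq]; simp
  have hae : a ∈ e := (Finset.mem_inter.mp haef).1
  have haf : a ∈ f := (Finset.mem_inter.mp haef).2
  have hbe : b ∈ e := (Finset.mem_inter.mp hbeg).1
  have hbg : b ∈ g := (Finset.mem_inter.mp hbeg).2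
  have hvab3 : ({v, a, b} : Finset V).card = 3 := by
    rw [Finset.card_insert_of_notMem (by simp [nva, nvb]),
      Finset.card_insert_of_notMem (by simp [nab]), Finset.card_singleton]
  have heEq : e = {v, a, b} := by
    refine (Finset.eq_of_subset_of_card_le ?_ (by omega)).symm
    intro z hz
    simp only [Finset.mem_insert, Finset.mem_singleton] at hz
    rcases hz with rfl | rfl | rfl <;> assumption
  refine ⟨v, hve, hvEq, ?_⟩
  by_contra hno
  push_neg at hno
  -- every edge through v other than e contains a or b
  have hstar : ∀ h ∈ H, v ∈ h → h ≠ ({v, a, b} : Finset V) → a ∈ h ∨ b ∈ h := by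
    intro h hH hvh hne'
    by_contra hcon
    push_neg at hcon
    refine hno h hH (by rw [heEq]; exact hne') ?_
    ext z
    simp only [Finset.mem_inter, Finset.mem_singleton]
    constructor
    · rintro ⟨hze, hzh⟩
      rw [heEq] at hze
      simp only [Finset.mem_insert, Finset.mem_singleton] at hze
      rcases hze with rfl | rfl | rfl
      · rfl
      · exact absurd hzh hcon.1
      · exact absurd hzh hcon.2
    · rintro rfl; exact ⟨hve, hvh⟩
  -- third vertices of f and g
  obtain ⟨xf, hxf1, hxf2, hfEq⟩ := ex3 hvf haf nva hf3
  have hxfb : xf ≠ b := by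
    rintro rfl
    exact hfe (by rw [hfEq, ← heEq])
  obtain ⟨yg, hyg1, hyg2, hgEq⟩ := ex3 hvg hbg nvb hg3
  have hyga : yg ≠ a := by
    rintro rfl
    refine hge ?_
    rw [hgEq, heEq, Finset.pair_comm b yg]
  set Xa : Finset V := Finset.univ.filter
      (fun t => (t ≠ v ∧ t ≠ a ∧ t ≠ b) ∧ ({v, a, t} : Finset V) ∈ H) with hXadef
  set Xb : Finset V := Finset.univ.filter
      (fun t => (t ≠ v ∧ t ≠ a ∧ t ≠ b) ∧ ({v, b, t} : Finset V) ∈ H) with hXbdef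
  have hxfXa : xf ∈ Xa := by
    rw [hXadef, Finset.mem_filter]
    exact ⟨Finset.mem_univ _, ⟨hxf1, hxf2, hxfb⟩, hfEq ▸ hf⟩
  have hygXb : yg ∈ Xb := by
    rw [hXbdef, Finset.mem_filter]
    exact ⟨Finset.mem_univ _, ⟨hyg1, hyga, hyg2⟩, hgEq ▸ hg⟩
  have hcov : (H.filter (fun h => v ∈ h)).erase e ⊆
      Xa.image (fun t => ({v, a, t} : Finset V)) ∪
      Xb.image (fun t => ({v, b, t} : Finset V)) := by
    intro h hh
    rw [Finset.mem_erase, Finset.mem_filter] at hh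
    obtain ⟨hne', hH, hvh⟩ := hh
    have hc3 := huniform h hH
    rw [Finset.mem_union]
    rcases hstar h hH hvh (by rw [← heEq]; exact hne') with hah | hbh
    · obtain ⟨t, ht1, ht2, hEq⟩ := ex3 hvh hah nva hc3
      have htb : t ≠ b := by
        rintro rfl
        exact hne' (by rw [hEq, ← heEq])
      left
      rw [Finset.mem_image]
      refine ⟨t, ?_, hEq.symm⟩
      rw [hXadef, Finset.mem_filter]
      exact ⟨Finset.mem_univ _, ⟨ht1, ht2, htb⟩, hEq ▸ hH⟩
    · obtain ⟨t, ht1, ht2, hEq⟩ := ex3 hvh hbh nvb hc3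
      have hta : t ≠ a := by
        rintro rfl
        refine hne' ?_
        rw [hEq, heEq, Finset.pair_comm b t]
      right
      rw [Finset.mem_image]
      refine ⟨t, ?_, hEq.symm⟩
      rw [hXbdef, Finset.mem_filter]
      exact ⟨Finset.mem_univ _, ⟨ht1, hta, ht2⟩, hEq ▸ hH⟩
  have h6 : 6 ≤ ((H.filter (fun h => v ∈ h)).erase e).card := by
    rw [Finset.card_erase_of_mem (Finset.mem_filter.mpr ⟨he, hve⟩)]
    have := hdeg v
    omega
  have hsum : ((H.filter (fun h => v ∈ h)).erase e).card ≤ Xa.card + Xb.card := by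
    refine le_trans (Finset.card_le_card hcov) (le_trans (Finset.card_union_le _ _) ?_)
    exact add_le_add Finset.card_image_le Finset.card_image_le
  have hexy : ∃ x y, x ∈ Xa ∧ y ∈ Xb ∧ x ≠ y := by
    by_cases h2a : 1 < Xa.card
    · obtain ⟨x, hx, hxy⟩ := Finset.exists_mem_ne h2a yg
      exact ⟨x, yg, hx, hygXb, hxy⟩
    · have h2b : 1 < Xb.card := by omega
      obtain ⟨y, hy, hyx⟩ := Finset.exists_mem_ne h2b xf
      exact ⟨xf, y, hxfXa, hy, fun h' => hyx h'.symm⟩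
  obtain ⟨x, y, hxXa, hyXb, nxy⟩ := hexy
  rw [hXadef, Finset.mem_filter] at hxXa
  rw [hXbdef, Finset.mem_filter] at hyXb
  obtain ⟨-, ⟨nxv, nxa, nxb⟩, hPx⟩ := hxXa
  obtain ⟨-, ⟨nyv, nya, nyb⟩, hQy⟩ := hyXb
  -- apply aux in both directions
  obtain ⟨w1, w2, hw12, hw1p, hw2p, hw1H, hw2H⟩ :=
    aux huniform hpath htri hdeg nva nvb nab nxv nxa nxb nyv nya nyb nxy hPx hQy hstar
  have hstar' : ∀ h ∈ H, v ∈ h → h ≠ ({v, b, a} : Finset V) → b ∈ h ∨ a ∈ h := by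
    intro h hH hvh hne'
    have : h ≠ ({v, a, b} : Finset V) := by
      rwa [show ({v, a, b} : Finset V) = {v, b, a} from by rw [Finset.pair_comm a b]]
    exact (hstar h hH hvh this).symm
  obtain ⟨z1, z2, hz12, hz1p, hz2p, hz1H, hz2H⟩ :=
    aux huniform hpath htri hdeg nvb nva nab.symm nyv nyb nya nxv nxb nxa nxy.symm
      hQy hPx hstar'
  -- choose w with w ≠ z1
  have hw : ∃ w, (w ≠ v ∧ w ≠ a ∧ w ≠ b ∧ w ≠ x ∧ w ≠ y) ∧
      ({a, x, w} : Finset V) ∈ H ∧ w ≠ z1 := by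
    by_cases hwz : w1 = z1
    · exact ⟨w2, hw2p, hw2H, fun h' => hw12 (hwz.trans h'.symm)⟩
    · exact ⟨w1, hw1p, hw1H, hwz⟩
  obtain ⟨w, hwp, hwH, hwz⟩ := hw
  have habv : ({a, b, v} : Finset V) ∈ H := by
    have h1 : ({v, a, b} : Finset V) = {a, v, b} := Finset.insert_comm v a _
    have h2 : ({a, v, b} : Finset V) = {a, b, v} := by rw [Finset.pair_comm v b]
    rw [heEq, h1, h2] at he
    exact he
  exact path_contra hpath hwH habv hz1H
    nab nva.symm nxa.symm hwp.2.1.symm nya.symm hz1p.2.2.1.symm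
    nvb.symm nxb.symm hwp.2.2.1.symm nyb.symm hz1p.2.1.symm
    nxv.symm hwp.1.symm nyv.symm hz1p.1.symm
    hwp.2.2.2.1.symm nxy hz1p.2.2.2.2.symm
    hwp.2.2.2.2 hwz hz1p.2.2.2.1.symm
end

section
/- Every finite simple graph with average degree d contains a connected component with at least d(d+1)/2 edges. -/
open scoped Classical

/-- Every finite simple graph with average degree `d = 2m/n` contains a
connected component with at least `d(d+1)/2` edges. -/
theorem stmt_17 {V : Type*} [Fintype V] [Nonempty V]
    (G : SimpleGraph V) [DecidableRel G.Adj] :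
    ∃ c : G.ConnectedComponent,
      ((2 * G.edgeFinset.card / Fintype.card V : ℚ) *
          (2 * G.edgeFinset.card / Fintype.card V + 1)) / 2 ≤
        ((G.edgeFinset.filter
          (fun ed => ∀ v ∈ ed, G.connectedComponentMk v = c)).card : ℚ) := by
  classical
  set Vc : G.ConnectedComponent → Finset V :=
    fun c => Finset.univ.filter (fun v => G.connectedComponentMk v = c) with hVc
  set Ec : G.ConnectedComponent → Finset (Sym2 V) :=
    fun c => G.edgeFinset.filter (fun ed => ∀ v ∈ ed, G.connectedComponentMk v = c) with hEc
  -- all vertices of an edge lie in the component of the first endpoint of the edge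
  have hmem : ∀ ed ∈ G.edgeFinset, ∀ v ∈ ed,
      G.connectedComponentMk v = G.connectedComponentMk (Quot.out ed).1 := by
    intro ed hed
    induction ed using Sym2.ind with
    | _ a b =>
      have hadj : G.Adj a b := SimpleGraph.mem_edgeFinset.mp hed
      have hab : G.connectedComponentMk a = G.connectedComponentMk b :=
        SimpleGraph.ConnectedComponent.sound hadj.reachable
      have hout : (Quot.out s(a, b)).1 ∈ s(a, b) := Sym2.out_fst_mem _
      have hfe : G.connectedComponentMk (Quot.out s(a, b)).1 = G.connectedComponentMk a := by
        rcases Sym2.mem_iff.mp hout with h | h <;> rw [h]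
        exact hab.symm
      intro v hv
      rw [hfe]
      rcases Sym2.mem_iff.mp hv with h | h
      · rw [h]
      · rw [h]; exact hab.symm
  -- decomposition of the edge set
  have hEcEq : ∀ c, Ec c = G.edgeFinset.filter
      (fun ed => G.connectedComponentMk (Quot.out ed).1 = c) := by
    intro c
    apply Finset.filter_congr
    intro ed hed
    constructor
    · intro h
      exact h _ (Sym2.out_fst_mem _)
    · intro h v hv
      rw [← h]
      exact hmem ed hed v hv
  have hsumE : ∑ c, (Ec c).card = G.edgeFinset.card := by
    rw [Finset.card_eq_sum_card_fiberwise
      (f := fun ed => G.connectedComponentMk (Quot.out ed).1) (t := Finset.univ)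
      (fun x _ => Finset.mem_univ _)]
    exact Finset.sum_congr rfl fun c _ => by rw [hEcEq c]
  -- decomposition of the vertex set
  have hsumV : ∑ c, (Vc c).card = Fintype.card V := by
    rw [← Finset.card_univ, Finset.card_eq_sum_card_fiberwise
      (f := fun v => G.connectedComponentMk v) (t := Finset.univ) (fun x _ => Finset.mem_univ _)]
  -- each component is nonempty
  have hA : ∀ c : G.ConnectedComponent, 1 ≤ (Vc c).card := by
    intro c
    obtain ⟨v, rfl⟩ := c.exists_rep
    exact Finset.card_pos.mpr ⟨v, Finset.mem_filter.mpr ⟨Finset.mem_univ v, rfl⟩⟩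
  -- edge bound within each component
  have hD : ∀ c : G.ConnectedComponent,
      2 * (Ec c).card + (Vc c).card ≤ (Vc c).card * (Vc c).card := by
    intro c
    have hsub : Ec c ⊆ (Vc c).offDiag.image Sym2.mk.uncurry := by
      intro ed hed
      induction ed using Sym2.ind with
      | _ a b =>
        have hed' := Finset.mem_filter.mp hed
        have hadj : G.Adj a b := SimpleGraph.mem_edgeFinset.mp hed'.1
        have ha : G.connectedComponentMk a = c := hed'.2 a (Sym2.mem_mk_left a b)
        have hb : G.connectedComponentMk b = c := hed'.2 b (Sym2.mem_mk_right a b)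
        refine Finset.mem_image.mpr ⟨(a, b), ?_, rfl⟩
        refine Finset.mem_offDiag.mpr ⟨?_, ?_, hadj.ne⟩ <;>
          exact Finset.mem_filter.mpr ⟨Finset.mem_univ _, by assumption⟩
    have h1 : 2 * (Ec c).card ≤ (Vc c).card * (Vc c).card - (Vc c).card :=
      calc 2 * (Ec c).card ≤ 2 * ((Vc c).offDiag.image Sym2.mk.uncurry).card :=
            Nat.mul_le_mul_left 2 (Finset.card_le_card hsub)
        _ = (Vc c).offDiag.card := Sym2.two_mul_card_image_offDiag _
        _ = (Vc c).card * (Vc c).card - (Vc c).card := Finset.offDiag_card _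
    have h2 : (Vc c).card ≤ (Vc c).card * (Vc c).card :=
      Nat.le_mul_of_pos_left _ (lt_of_lt_of_le Nat.zero_lt_one (hA c))
    omega
  -- choose a component maximizing the edge/vertex ratio
  have hne : (Finset.univ : Finset G.ConnectedComponent).Nonempty :=
    ⟨G.connectedComponentMk (Classical.arbitrary V), Finset.mem_univ _⟩
  obtain ⟨c₀, -, hmax⟩ := Finset.exists_max_image Finset.univ
    (fun c => ((Ec c).card : ℚ) / ((Vc c).card : ℚ)) hne
  refine ⟨c₀, ?_⟩
  -- rational quantities
  set M : ℚ := ((Ec c₀).card : ℚ) with hM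
  set N : ℚ := ((Vc c₀).card : ℚ) with hN
  set m : ℚ := (G.edgeFinset.card : ℚ) with hm
  set n : ℚ := (Fintype.card V : ℚ) with hn
  have hN1 : 1 ≤ N := by rw [hN]; exact_mod_cast hA c₀
  have hN0 : 0 < N := lt_of_lt_of_le one_pos hN1
  have hn1 : 1 ≤ n := by rw [hn]; exact_mod_cast Fintype.card_pos
  have hn0 : 0 < n := lt_of_lt_of_le one_pos hn1
  have hM0 : 0 ≤ M := by positivity
  have hm0 : 0 ≤ m := by positivity
  -- the weighted average inequality : m * N ≤ M * n
  have hkey : m * N ≤ M * n := by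
    have h1 : ∀ c : G.ConnectedComponent,
        ((Ec c).card : ℚ) ≤ M / N * ((Vc c).card : ℚ) := by
      intro c
      have hc := hmax c (Finset.mem_univ c)
      have hVcpos : (0 : ℚ) < ((Vc c).card : ℚ) := by exact_mod_cast hA c
      rw [div_le_div_iff₀ hVcpos hN0] at hc
      rw [div_mul_eq_mul_div, le_div_iff₀ hN0]
      linarith [hc]
    have h2 : m ≤ M / N * n := by
      rw [hm, hn, ← hsumE, ← hsumV]
      push_cast
      rw [Finset.mul_sum]
      exact Finset.sum_le_sum fun c _ => h1 c

    calc m * N ≤ M / N * n * N := mul_le_mul_of_nonneg_right h2 (le_of_lt hN0)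
      _ = M * n := by field_simp
  -- the component edge bound : 2 * M + N ≤ N * N
  have hbound : 2 * M + N ≤ N * N := by
    have h := hD c₀
    rw [hM, hN]
    exact_mod_cast h
  -- final computation
  show (2 * m / n) * (2 * m / n + 1) / 2 ≤ M
  have hrw : (2 * m / n) * (2 * m / n + 1) / 2 = (2 * m * m + m * n) / (n * n) := by
    field_simp
  rw [hrw, div_le_iff₀ (by positivity)]
  -- need : 2*m*m + m*n ≤ M*(n*n), using m*N ≤ M*n and 2*M + N ≤ N*N
  have e1 : m * N * (m * N) ≤ M * n * (M * n) :=
    mul_le_mul hkey hkey (by positivity) (by positivity)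
  have e2 : (m * N) * (n * N) ≤ (M * n) * (n * N) :=
    mul_le_mul_of_nonneg_right hkey (by positivity)
  have e3 : M * (n * n) * (2 * M + N) ≤ M * (n * n) * (N * N) :=
    mul_le_mul_of_nonneg_left hbound (by positivity)
  have emain : (2 * m * m + m * n) * (N * N) ≤ M * (n * n) * (N * N) :=
    calc (2 * m * m + m * n) * (N * N)
        = 2 * (m * N * (m * N)) + (m * N) * (n * N) := by ring
      _ ≤ 2 * (M * n * (M * n)) + (M * n) * (n * N) := by linarith [e1, e2]
      _ = M * (n * n) * (2 * M + N) := by ring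
      _ ≤ M * (n * n) * (N * N) := e3
  have hNN : (0 : ℚ) < N * N := by positivity
  calc (2 * m * m + m * n) ≤ M * (n * n) := le_of_mul_le_mul_right emain hNN
    _ = M * (n * n) := rfl
end
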